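/- arXiv:1402.3831 — 9 statements merged into one kernel-verified Lean document; each statement's English description precedes it below -/
import Mathlib

section
/- Suppose θ > 0 and 0 < L ≤ L_d(θ). Then f is nondecreasing on (0, θ) (i.e. f′(X) ≥ 0 for all X ∈ (0, θ)), and 0 is the unique global minimizer of f on D; in fact f(X) > 0 = f(0) for every X ∈ D with X > 0. -/
open Real Set

/-- The auxiliary energy `f(X) = (θ - X)^(-1/2) - L·X²` for `0 < X < θ`, with `f(0) = 0`. -/
noncomputable def f (θ L X : ℝ) : ℝ :=
  if X = 0 then 0 else (θ - X) ^ (-(1:ℝ)/2) - L * X ^ 2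

/-- `L_d(θ) = (25/24)·√(5/3)·θ^(-5/2)`. -/
noncomputable def Ld (θ : ℝ) : ℝ := (25/24) * Real.sqrt (5/3) * θ ^ (-(5:ℝ)/2)

/-- `θ* = (5/4)·α^(-1/2)`. -/
noncomputable def θstar (α : ℝ) : ℝ := (5/4) * α ^ (-(1:ℝ)/2)

/-- `L_01(θ) = (5^(5/2)/16)·θ^(-5/2)`. -/
noncomputable def L01 (θ : ℝ) : ℝ := ((5:ℝ) ^ ((5:ℝ)/2) / 16) * θ ^ (-(5:ℝ)/2)

/-- `L_02(θ) = α^(5/4)·(√α·θ - 1)^(-1/2)`. -/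
noncomputable def L02 (α θ : ℝ) : ℝ := α ^ ((5:ℝ)/4) * (Real.sqrt α * θ - 1) ^ (-(1:ℝ)/2)

/-- `L_12(θ) = (2α³θ + 2α²√(α(αθ² - 1)))^(1/2)`. -/
noncomputable def L12 (α θ : ℝ) : ℝ :=
  Real.sqrt (2*α^3*θ + 2*α^2 * Real.sqrt (α*(α*θ^2 - 1)))

lemma key1' (θ X : ℝ) (h0 : 0 < X) (h1 : X < θ) : 3125 * (X^2*(θ-X)^3) ≤ 108*θ^5 := by
  nlinarith [sq_nonneg (5*X-2*θ), mul_nonneg (sq_nonneg (5*X-2*θ)) (pow_pos h0 3).le,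
    mul_nonneg (mul_nonneg (sq_nonneg (5*X-2*θ)) (sq_nonneg X)) (sub_pos.mpr h1).le,
    mul_nonneg (mul_nonneg (sq_nonneg (5*X-2*θ)) h0.le) (sq_nonneg (θ-X)),
    mul_nonneg (sq_nonneg (5*X-2*θ)) (pow_pos (sub_pos.mpr h1) 3).le]

lemma key2' (θ X : ℝ) (h0 : 0 < X) (h1 : X < θ) : 3125 * (X^4*(θ-X)) ≤ 256*θ^5 := by
  nlinarith [mul_nonneg (sq_nonneg (5*X-4*θ)) (pow_pos h0 3).le,
    mul_nonneg (mul_nonneg (sq_nonneg (5*X-4*θ)) (sq_nonneg X)) (h0.trans h1).le,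
    mul_nonneg (mul_nonneg (sq_nonneg (5*X-4*θ)) h0.le) (sq_nonneg θ),
    mul_nonneg (sq_nonneg (5*X-4*θ)) (pow_pos (h0.trans h1) 3).le]

-- square of Ld
lemma Ld_sq (θ : ℝ) (hθ : 0 < θ) : (Ld θ)^2 * θ^5 = 3125/1728 := by
  have hc : Real.sqrt (5/3) ^ 2 = 5/3 := Real.sq_sqrt (by norm_num)
  have hv : (θ ^ (-(5:ℝ)/2))^2 * θ^5 = 1 := by
    have : (θ ^ (-(5:ℝ)/2))^2 = θ ^ (-(5:ℝ)) := by
      rw [← Real.rpow_natCast (θ ^ (-(5:ℝ)/2)) 2, ← Real.rpow_mul hθ.le]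
      norm_num
    rw [this, Real.rpow_neg hθ.le, ← Real.rpow_natCast θ 5]
    simp
    exact inv_mul_cancel₀ (by positivity)
  have : (Ld θ)^2 = (625/576) * (5/3) * (θ ^ (-(5:ℝ)/2))^2 := by
    unfold Ld; rw [mul_pow, mul_pow, hc]; ring
  rw [this]; nlinarith [hv]

lemma Ld_pos (θ : ℝ) (hθ : 0 < θ) : 0 < Ld θ := by
  unfold Ld; positivity

-- the key bound for the derivative: 4 L X u³ ≤ 1 with u = (θ-X)^(1/2)
lemma bound1 (θ L X : ℝ) (hθ : 0 < θ) (hL0 : 0 < L) (hL : L ≤ Ld θ)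
    (h0 : 0 < X) (h1 : X < θ) :
    4 * L * X * ((θ - X) ^ ((1:ℝ)/2))^3 ≤ 1 := by
  set y := θ - X with hy
  have hy0 : 0 < y := sub_pos.mpr h1
  set u := y ^ ((1:ℝ)/2) with hu
  have hu0 : 0 < u := Real.rpow_pos_of_pos hy0 _
  have hu2 : u^2 = y := by
    rw [hu, ← Real.rpow_natCast (y ^ ((1:ℝ)/2)) 2, ← Real.rpow_mul hy0.le]
    norm_num
  have ha0 : 0 ≤ L * X * u^3 := by positivity
  have hsq : (L * X * u^3)^2 ≤ 1/16 := by
    have h6 : (u^3)^2 = y^3 := by rw [← pow_mul, show 3*2 = 2*3 from rfl, pow_mul, hu2]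
    have e1 : (L * X * u^3)^2 = L^2 * (X^2 * y^3) := by rw [mul_pow, mul_pow, h6]; ring
    have hLsq : L^2 ≤ (Ld θ)^2 := by nlinarith [Ld_pos θ hθ]
    have hk := key1' θ X h0 h1
    have hLd2 := Ld_sq θ hθ
    have h2 : L^2 * (X^2 * y^3) ≤ (Ld θ)^2 * (X^2 * y^3) := by
      apply mul_le_mul_of_nonneg_right hLsq; positivity
    have h3 : (Ld θ)^2 * (X^2 * y^3) ≤ (Ld θ)^2 * (108/3125 * θ^5) := by
      apply mul_le_mul_of_nonneg_left _ (by positivity)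
      rw [hy]; linarith [key1' θ X h0 h1]
    have h4 : (Ld θ)^2 * (108/3125 * θ^5) = 1/16 := by
      have := Ld_sq θ hθ; nlinarith
    linarith [e1 ▸ (h2.trans (h3.trans_eq h4))]
  nlinarith [sq_nonneg (L * X * u^3 - 1/4)]

-- key bound for positivity: L X² u < 1
lemma bound2 (θ L X : ℝ) (hθ : 0 < θ) (hL0 : 0 < L) (hL : L ≤ Ld θ)
    (h0 : 0 < X) (h1 : X < θ) :
    L * X^2 * (θ - X) ^ ((1:ℝ)/2) < 1 := by
  set y := θ - X with hy
  have hy0 : 0 < y := sub_pos.mpr h1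
  set u := y ^ ((1:ℝ)/2) with hu
  have hu0 : 0 < u := Real.rpow_pos_of_pos hy0 _
  have hu2 : u^2 = y := by
    rw [hu, ← Real.rpow_natCast (y ^ ((1:ℝ)/2)) 2, ← Real.rpow_mul hy0.le]
    norm_num
  have ha0 : 0 ≤ L * X^2 * u := by positivity
  have hsq : (L * X^2 * u)^2 ≤ 4/27 := by
    have e1 : (L * X^2 * u)^2 = L^2 * (X^4 * y) := by
      rw [mul_pow, mul_pow, hu2, ← pow_mul]; ring
    have hLsq : L^2 ≤ (Ld θ)^2 := by nlinarith [Ld_pos θ hθ]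
    have h2 : L^2 * (X^4 * y) ≤ (Ld θ)^2 * (X^4 * y) := by
      apply mul_le_mul_of_nonneg_right hLsq; positivity
    have h3 : (Ld θ)^2 * (X^4 * y) ≤ (Ld θ)^2 * (256/3125 * θ^5) := by
      apply mul_le_mul_of_nonneg_left _ (by positivity)
      rw [hy]; linarith [key2' θ X h0 h1]
    have h4 : (Ld θ)^2 * (256/3125 * θ^5) = 4/27 := by
      have := Ld_sq θ hθ; nlinarith
    linarith [e1 ▸ (h2.trans (h3.trans_eq h4))]
  nlinarith

-- derivative of f on (0, θ)
lemma f_hasDeriv (θ L X : ℝ) (h0 : 0 < X) (h1 : X < θ) :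
    HasDerivAt (f θ L) ((1/2) * (((θ - X) ^ ((1:ℝ)/2))^3)⁻¹ - L * (2*X)) X := by
  have hy0 : (0:ℝ) < θ - X := sub_pos.mpr h1
  have h1' : HasDerivAt (fun x : ℝ => θ - x) (-1) X := (hasDerivAt_id X).const_sub θ
  have h2 : HasDerivAt (fun x : ℝ => (θ - x) ^ (-(1:ℝ)/2))
      ((-1) * (-(1:ℝ)/2) * (θ - X) ^ (-(1:ℝ)/2 - 1)) X :=
    h1'.rpow_const (p := -(1:ℝ)/2) (Or.inl (ne_of_gt hy0))
  have h3 : HasDerivAt (fun x : ℝ => L * x ^ 2) (L * (2*X)) X := by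
    have := (hasDerivAt_pow 2 X).const_mul L
    simpa using this
  have h4 := h2.sub h3
  have heq : (-1) * (-(1:ℝ)/2) * (θ - X) ^ (-(1:ℝ)/2 - 1) - L * (2*X)
      = (1/2) * (((θ - X) ^ ((1:ℝ)/2))^3)⁻¹ - L * (2*X) := by
    congr 1
    have e1 : (-(1:ℝ)/2 - 1) = -((3:ℝ)/2) := by norm_num
    have e2 : (θ - X) ^ (-((3:ℝ)/2)) = (((θ - X) ^ ((1:ℝ)/2))^3)⁻¹ := by
      rw [Real.rpow_neg hy0.le]
      congr 1
      rw [← Real.rpow_natCast ((θ - X) ^ ((1:ℝ)/2)) 3, ← Real.rpow_mul hy0.le]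
      norm_num
    rw [e1, e2]; ring
  rw [heq] at h4
  apply h4.congr_of_eventuallyEq
  filter_upwards [eventually_ne_nhds (ne_of_gt h0)] with x hx
  simp [f, hx]

/-- If `θ > 0` and `0 < L ≤ L_d(θ)`, then `f` is nondecreasing on `(0, θ)`
(its derivative is nonnegative there), and `0` is the unique global minimizer of `f` on
`D = [0, θ̃⁺]`: in fact `f(X) > 0 = f(0)` for every `X ∈ D` with `X > 0`. -/
theorem stmt_0 (α θ L : ℝ) (hα : 0 < α) (hθ : 0 < θ) (hL0 : 0 < L) (hL : L ≤ Ld θ) :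
    MonotoneOn (f θ L) (Ioo 0 θ) ∧
    (∀ X ∈ Ioo (0:ℝ) θ, 0 ≤ deriv (f θ L) X) ∧
    f θ L 0 = 0 ∧
    (∀ X ∈ Icc (0:ℝ) (max (θ - α^2/L^2) 0), 0 < X → 0 < f θ L X) := by

  have hderiv_nonneg : ∀ X ∈ Ioo (0:ℝ) θ, 0 ≤ deriv (f θ L) X := by
    intro X hX
    obtain ⟨h0, h1⟩ := hX
    have hd := f_hasDeriv θ L X h0 h1
    rw [hd.deriv]
    have hy0 : (0:ℝ) < θ - X := sub_pos.mpr h1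
    have hu0 : 0 < (θ - X) ^ ((1:ℝ)/2) := Real.rpow_pos_of_pos hy0 _
    have hb := bound1 θ L X hθ hL0 hL h0 h1
    have hu3 : 0 < ((θ - X) ^ ((1:ℝ)/2))^3 := by positivity
    rw [sub_nonneg, ← div_eq_mul_inv, le_div_iff₀ hu3]
    nlinarith
  refine ⟨?_, hderiv_nonneg, by simp [f], ?_⟩
  · apply monotoneOn_of_deriv_nonneg (convex_Ioo 0 θ)
    · intro X hX
      exact ((f_hasDeriv θ L X hX.1 hX.2).differentiableAt.continuousAt).continuousWithinAt
    · rw [interior_Ioo]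
      intro X hX
      exact (f_hasDeriv θ L X hX.1 hX.2).differentiableAt.differentiableWithinAt
    · rw [interior_Ioo]; exact hderiv_nonneg
  · intro X hX hX0
    have hXθ : X < θ := by
      rcases le_or_gt (θ - α^2/L^2) 0 with h | h
      · have := hX.2; rw [max_eq_right h] at this; linarith
      · have := hX.2; rw [max_eq_left h.le] at this
        have : X ≤ θ - α^2/L^2 := this
        have hpos : 0 < α^2/L^2 := by positivity
        linarith
    have hy0 : (0:ℝ) < θ - X := sub_pos.mpr hXθ
    have hu0 : 0 < (θ - X) ^ ((1:ℝ)/2) := Real.rpow_pos_of_pos hy0 _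
    have hb := bound2 θ L X hθ hL0 hL hX0 hXθ
    have hfX : f θ L X = (θ - X) ^ (-(1:ℝ)/2) - L * X ^ 2 := by
      simp [f, ne_of_gt hX0]
    have hinv : (θ - X) ^ (-(1:ℝ)/2) = ((θ - X) ^ ((1:ℝ)/2))⁻¹ := by
      rw [neg_div, Real.rpow_neg hy0.le]
    rw [hfX, hinv, sub_pos, ← one_div, lt_div_iff₀ hu0]
    linarith
end

section
/- On the open set {(θ, L) : θ > 0, L > L_d(θ)} the function (θ, L) ↦ X_m(θ, L) is differentiable, with partial derivatives ∂X_m/∂θ = [(3/4)(θ − X_m)^(−5/2)] / [(3/4)(θ − X_m)^(−5/2) − 2L] > 1 and ∂X_m/∂L = 2·X_m / [(3/4)(θ − X_m)^(−5/2) − 2L] > 0. -/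
open Real Set Filter Topology

/-- A right inverse `g` of `F` near `a` with values in a set on which `F` is injective coincides
with the local inverse of `F`, so no continuity of `g` is needed. -/
theorem HasStrictDerivAt.of_local_left_inverse_of_injOn {𝕜 : Type*} [NontriviallyNormedField 𝕜]
    [CompleteSpace 𝕜] {F g : 𝕜 → 𝕜} {F' a : 𝕜} {s : Set 𝕜}
    (hF : HasStrictDerivAt F F' (g a)) (hF' : F' ≠ 0) (hinj : InjOn F s) (hs : s ∈ 𝓝 (g a))
    (hg : ∀ᶠ b in 𝓝 a, g b ∈ s ∧ F (g b) = b) : HasStrictDerivAt g F'⁻¹ a := by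
  have hFa : F (g a) = a := hg.self_of_nhds.2
  set G := hF.localInverse F F' (g a) hF'
  have hG : HasStrictDerivAt G F'⁻¹ a := hFa ▸ hF.to_localInverse hF'
  have hGa : G a = g a := by
    have := (hF.eventually_left_inverse hF').self_of_nhds
    rwa [hFa] at this
  have hGs : ∀ᶠ b in 𝓝 a, G b ∈ s := hG.hasDerivAt.continuousAt.eventually_mem (hGa ▸ hs)
  have hFG : ∀ᶠ b in 𝓝 a, F (G b) = b := hFa ▸ hF.eventually_right_inverse hF'
  refine hG.congr_of_eventuallyEq ?_
  filter_upwards [hg, hGs, hFG] with b ⟨hgb, hFgb⟩ hGb hFGb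
  exact hinj hGb hgb (hFGb.trans hFgb.symm)

/-- The value of `L` for which `X` is a critical point of `f θ L`. -/
noncomputable def critL (θ X : ℝ) : ℝ := (θ - X) ^ (-(3:ℝ)/2) / (4 * X)

/-- The value of `θ` for which `X` is a critical point of `f θ L`. -/
noncomputable def critθ (L X : ℝ) : ℝ := X + (4 * L) ^ (-(2:ℝ)/3) * X ^ (-(2:ℝ)/3)

/-- The minimum point of `critθ L`. -/
noncomputable def critθThreshold (L : ℝ) : ℝ := ((2/3) * (4 * L) ^ (-(2:ℝ)/3)) ^ ((3:ℝ)/5)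

/-- The defining property of `X_m(θ, L)`: a critical point of `f θ L` on the branch where
`f'' > 0` (see `three_quarters_sub_two_critL`). -/
def OnMinBranch (θ L X : ℝ) : Prop :=
  X ∈ Ioo (2*θ/5) θ ∧ (1/2) * (θ - X) ^ (-(3:ℝ)/2) = 2 * L * X

variable {θ L X : ℝ}

lemma pos_of_mem_Ioo_two_fifths (hX : X ∈ Ioo (2*θ/5) θ) : 0 < X := by
  linarith [hX.1, hX.2]

lemma two_thirds_mul_div_lt_one (hX : X ∈ Ioo (2*θ/5) θ) : (2/3) * ((θ - X) / X) < 1 := by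
  rw [← mul_div_assoc, div_lt_one (pos_of_mem_Ioo_two_fifths hX)]
  linarith [hX.1]

lemma rpow_neg_three_halves_eq_mul {u : ℝ} (hu : 0 < u) :
    u ^ (-(3:ℝ)/2) = u * u ^ (-(5:ℝ)/2) := by
  rw [show (-(3:ℝ)/2) = 1 + (-(5:ℝ)/2) by norm_num, rpow_add hu, rpow_one]

lemma critL_pos (hX : 0 < X) (hXθ : X < θ) : 0 < critL θ X := by
  have : 0 < θ - X := sub_pos.2 hXθ
  unfold critL; positivity

lemma three_quarters_sub_two_critL (hX : 0 < X) (hXθ : X < θ) :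
    (3/4) * (θ - X) ^ (-(5:ℝ)/2) - 2 * critL θ X =
      (3/4) * (θ - X) ^ (-(5:ℝ)/2) * (1 - (2/3) * ((θ - X) / X)) := by
  rw [critL, rpow_neg_three_halves_eq_mul (sub_pos.2 hXθ)]
  field_simp

lemma three_quarters_sub_two_critL_pos (hX : X ∈ Ioo (2*θ/5) θ) :
    0 < (3/4) * (θ - X) ^ (-(5:ℝ)/2) - 2 * critL θ X := by
  rw [three_quarters_sub_two_critL (pos_of_mem_Ioo_two_fifths hX) hX.2]
  have := rpow_pos_of_pos (sub_pos.2 hX.2) (-(5:ℝ)/2)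
  have := sub_pos.2 (two_thirds_mul_div_lt_one hX)
  positivity

lemma hasStrictDerivAt_critL (hX : 0 < X) (hXθ : X < θ) :
    HasStrictDerivAt (critL θ)
      (((3/4) * (θ - X) ^ (-(5:ℝ)/2) - 2 * critL θ X) / (2 * X)) X := by
  have hu : 0 < θ - X := sub_pos.2 hXθ
  have hnum : HasStrictDerivAt (fun Z => (θ - Z) ^ (-(3:ℝ)/2))
      ((-(3:ℝ)/2) * (θ - X) ^ (-(3:ℝ)/2 - 1) * (-1)) X :=
    (hasStrictDerivAt_rpow_const (Or.inl hu.ne')).comp X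
      ((hasStrictDerivAt_id X).const_sub θ)
  have hden : HasStrictDerivAt (fun Z => 4 * Z) 4 X := by
    simpa using (hasStrictDerivAt_id X).const_mul (4:ℝ)
  refine (hnum.div hden (by positivity)).congr_deriv ?_
  rw [critL, show (-(3:ℝ)/2 - 1) = (-(5:ℝ)/2) by norm_num, rpow_neg_three_halves_eq_mul hu]
  field_simp

lemma strictMonoOn_critL : StrictMonoOn (critL θ) (Ioo (2*θ/5) θ) := by
  have hpos : ∀ X ∈ Ioo (2*θ/5) θ, 0 < X := fun X => pos_of_mem_Ioo_two_fifths
  refine strictMonoOn_of_hasDerivWithinAt_pos (convex_Ioo _ _)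
    (f' := fun X => ((3/4) * (θ - X) ^ (-(5:ℝ)/2) - 2 * critL θ X) / (2 * X))
    (fun X hX =>
      (hasStrictDerivAt_critL (hpos X hX) hX.2).hasDerivAt.continuousAt.continuousWithinAt)
    (fun X hX => ?_) (fun X hX => ?_)
  all_goals rw [interior_Ioo] at hX
  · exact (hasStrictDerivAt_critL (hpos X hX) hX.2).hasDerivAt.hasDerivWithinAt
  · exact div_pos (three_quarters_sub_two_critL_pos hX) (by linarith [hpos X hX])

lemma hasStrictDerivAt_critθ (hX : 0 < X) :
    HasStrictDerivAt (critθ L) (1 - (2/3) * ((critθ L X - X) / X)) X := by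
  have hpow : HasStrictDerivAt (fun Z : ℝ => Z ^ (-(2:ℝ)/3))
      ((-(2:ℝ)/3) * X ^ (-(2:ℝ)/3 - 1)) X :=
    hasStrictDerivAt_rpow_const (Or.inl hX.ne')
  refine ((hasStrictDerivAt_id X).add (hpow.const_mul _)).congr_deriv ?_
  rw [critθ, rpow_sub_one hX.ne']
  ring

lemma critθThreshold_lt_iff (hL : 0 < L) (hX : 0 < X) :
    critθThreshold L < X ↔ (2/3) * ((critθ L X - X) / X) < 1 := by
  have hX53 : X ^ (-(2:ℝ)/3) / X = (X ^ ((5:ℝ)/3))⁻¹ := by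
    rw [← rpow_sub_one hX.ne', ← rpow_neg hX.le]; norm_num
  rw [critθ, add_sub_cancel_left, mul_div_assoc, hX53, ← mul_assoc, ← div_eq_mul_inv,
    div_lt_one (by positivity), critθThreshold, show (3:ℝ)/5 = ((5:ℝ)/3)⁻¹ by norm_num,
    rpow_inv_lt_iff_of_pos (by positivity) hX.le (by norm_num)]

lemma strictMonoOn_critθ (hL : 0 < L) : StrictMonoOn (critθ L) (Ioi (critθThreshold L)) := by
  have hpos : ∀ X ∈ Ioi (critθThreshold L), 0 < X :=
    fun X hX => lt_of_le_of_lt (by unfold critθThreshold; positivity) hX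
  refine strictMonoOn_of_hasDerivWithinAt_pos (convex_Ioi _)
    (f' := fun X => 1 - (2/3) * ((critθ L X - X) / X))
    (fun X hX => (hasStrictDerivAt_critθ (hpos X hX)).hasDerivAt.continuousAt.continuousWithinAt)
    (fun X hX => ?_) (fun X hX => ?_)
  all_goals rw [interior_Ioi] at hX
  · exact (hasStrictDerivAt_critθ (hpos X hX)).hasDerivAt.hasDerivWithinAt
  · exact sub_pos.2 ((critθThreshold_lt_iff hL (hpos X hX)).1 hX)

namespace OnMinBranch

variable (h : OnMinBranch θ L X)
include h

lemma pos : 0 < X := pos_of_mem_Ioo_two_fifths h.1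

lemma critL_eq : critL θ X = L := by
  rw [critL, div_eq_iff (by linarith [h.pos])]
  linarith [h.2]

lemma L_pos : 0 < L := h.critL_eq ▸ critL_pos h.pos h.1.2

lemma three_quarters_sub_two_pos : 0 < (3/4) * (θ - X) ^ (-(5:ℝ)/2) - 2 * L :=
  h.critL_eq ▸ three_quarters_sub_two_critL_pos h.1

lemma critθ_eq : critθ L X = θ := by
  have hu : 0 < θ - X := sub_pos.2 h.1.2
  have h4LX : 4 * L * X = (θ - X) ^ (-(3:ℝ)/2) := by linarith [h.2]
  rw [critθ, ← mul_rpow (by linarith [h.L_pos]) h.pos.le, h4LX, ← rpow_mul hu.le]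
  norm_num

lemma critθThreshold_lt : critθThreshold L < X := by
  rw [critθThreshold_lt_iff h.L_pos h.pos, h.critθ_eq]
  exact two_thirds_mul_div_lt_one h.1

end OnMinBranch

theorem hasStrictDerivAt_of_eventually_onMinBranch_L {g : ℝ → ℝ}
    (hg : ∀ᶠ l in 𝓝 L, OnMinBranch θ l (g l)) :
    HasStrictDerivAt g (2 * g L / ((3/4) * (θ - g L) ^ (-(5:ℝ)/2) - 2 * L)) L := by
  have h := hg.self_of_nhds
  have hderiv := hasStrictDerivAt_critL h.pos h.1.2
  rw [h.critL_eq] at hderiv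
  refine (hderiv.of_local_left_inverse_of_injOn
    (div_pos h.three_quarters_sub_two_pos (by linarith [h.pos])).ne' strictMonoOn_critL.injOn
    (Ioo_mem_nhds h.1.1 h.1.2) (hg.mono fun l hl => ⟨hl.1, hl.critL_eq⟩)).congr_deriv ?_
  exact inv_div _ _

theorem hasStrictDerivAt_of_eventually_onMinBranch_θ {g : ℝ → ℝ}
    (hg : ∀ᶠ t in 𝓝 θ, OnMinBranch t L (g t)) :
    HasStrictDerivAt g ((3/4) * (θ - g θ) ^ (-(5:ℝ)/2) /
      ((3/4) * (θ - g θ) ^ (-(5:ℝ)/2) - 2 * L)) θ := by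
  have h := hg.self_of_nhds
  have hderiv := hasStrictDerivAt_critθ (L := L) h.pos
  rw [h.critθ_eq] at hderiv
  refine (hderiv.of_local_left_inverse_of_injOn (sub_pos.2 (two_thirds_mul_div_lt_one h.1)).ne'
    (strictMonoOn_critθ h.L_pos).injOn (Ioi_mem_nhds h.critθThreshold_lt)
    (hg.mono fun t ht => ⟨ht.critθThreshold_lt, ht.critθ_eq⟩)).congr_deriv ?_
  have hA : (3/4) * (θ - g θ) ^ (-(5:ℝ)/2) ≠ 0 := (mul_pos (by norm_num)
    (rpow_pos_of_pos (sub_pos.2 h.1.2) _)).ne'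
  rw [← h.critL_eq, three_quarters_sub_two_critL h.pos h.1.2, div_mul_cancel_left₀ hA]

/-- On `{(θ, L) : θ > 0, L > L_d(θ)}`, the function `X_m(θ, L)` (the unique
`X ∈ (2θ/5, θ)` with `(1/2)(θ - X)^(-3/2) = 2LX`) is differentiable in each variable, with
`∂X_m/∂θ = (3/4)(θ - X_m)^(-5/2) / ((3/4)(θ - X_m)^(-5/2) - 2L) > 1` and
`∂X_m/∂L = 2X_m / ((3/4)(θ - X_m)^(-5/2) - 2L) > 0`. -/
theorem stmt_3 (Xm : ℝ → ℝ → ℝ)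
    (hXm : ∀ θ L : ℝ, 0 < θ → Ld θ < L →
      Xm θ L ∈ Ioo (2*θ/5) θ ∧ (1/2) * (θ - Xm θ L) ^ (-(3:ℝ)/2) = 2 * L * Xm θ L)
    (θ L : ℝ) (hθ : 0 < θ) (hL : Ld θ < L) :
    HasDerivAt (fun t => Xm t L)
      (((3/4) * (θ - Xm θ L) ^ (-(5:ℝ)/2)) /
        ((3/4) * (θ - Xm θ L) ^ (-(5:ℝ)/2) - 2*L)) θ ∧
    1 < ((3/4) * (θ - Xm θ L) ^ (-(5:ℝ)/2)) /
        ((3/4) * (θ - Xm θ L) ^ (-(5:ℝ)/2) - 2*L) ∧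
    HasDerivAt (fun l => Xm θ l)
      ((2 * Xm θ L) / ((3/4) * (θ - Xm θ L) ^ (-(5:ℝ)/2) - 2*L)) L ∧
    0 < (2 * Xm θ L) / ((3/4) * (θ - Xm θ L) ^ (-(5:ℝ)/2) - 2*L) := by
  have hLd : ∀ᶠ t in 𝓝 θ, Ld t < L :=
    (continuousAt_const.mul (continuousAt_rpow_const θ _ (Or.inl hθ.ne'))).eventually_lt
      continuousAt_const hL
  have h : OnMinBranch θ L (Xm θ L) := hXm θ L hθ hL
  refine ⟨(hasStrictDerivAt_of_eventually_onMinBranch_θ ?_).hasDerivAt,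
    (one_lt_div h.three_quarters_sub_two_pos).2 (by linarith [h.L_pos]),
    (hasStrictDerivAt_of_eventually_onMinBranch_L ?_).hasDerivAt,
    div_pos (by linarith [h.pos]) h.three_quarters_sub_two_pos⟩
  · filter_upwards [eventually_gt_nhds hθ, hLd] with t ht htL using hXm t L ht htL
  · filter_upwards [eventually_gt_nhds hL] with l hl using hXm θ l hθ hl
end

section
/- One has L_01(θ*) = L_02(θ*) = L_12(θ*) = 2·α^(5/4); for every θ > θ*, L_01(θ) < L_02(θ) < L_12(θ); and for every θ > 0, L_d(θ) < L_01(θ). -/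
open Real Set

lemma rneg_half {x:ℝ} (hx : 0 < x) : x ^ (-(1:ℝ)/2) = (Real.sqrt x)⁻¹ := by
  rw [show (-(1:ℝ)/2) = -(1/2) by ring, Real.rpow_neg hx.le, ← Real.sqrt_eq_rpow]

lemma rneg_fh {x:ℝ} (hx : 0 < x) : x ^ (-(5:ℝ)/2) = ((Real.sqrt x)^5)⁻¹ := by
  rw [show (-(5:ℝ)/2) = (1/2)*(-5) by ring, Real.rpow_mul hx.le, ← Real.sqrt_eq_rpow,
    show (-5:ℝ) = -(5:ℕ) by norm_num, Real.rpow_neg (Real.sqrt_nonneg x), Real.rpow_natCast]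

lemma rfq {x:ℝ} (hx : 0 < x) : x ^ ((5:ℝ)/4) = (Real.sqrt (Real.sqrt x))^5 := by
  rw [show ((5:ℝ)/4) = (1/2)*((1/2)*5) by ring, Real.rpow_mul hx.le, ← Real.sqrt_eq_rpow,
    Real.rpow_mul (Real.sqrt_nonneg x), ← Real.sqrt_eq_rpow,
    show (5:ℝ) = (5:ℕ) by norm_num, Real.rpow_natCast]

lemma rfh : (5:ℝ) ^ ((5:ℝ)/2) = (Real.sqrt 5)^5 := by
  rw [show ((5:ℝ)/2) = (1/2)*5 by ring, Real.rpow_mul (by norm_num : (0:ℝ) ≤ 5),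
    ← Real.sqrt_eq_rpow, show (5:ℝ) = (5:ℕ) by norm_num, Real.rpow_natCast]

set_option maxHeartbeats 1600000 in
/-- `L_01(θ*) = L_02(θ*) = L_12(θ*) = 2·α^(5/4)`; for `θ > θ*` one has
`L_01(θ) < L_02(θ) < L_12(θ)`; and `L_d(θ) < L_01(θ)` for every `θ > 0`. -/
theorem stmt_5 (α : ℝ) (hα : 0 < α) :
    (L01 (θstar α) = 2 * α ^ ((5:ℝ)/4) ∧ L02 α (θstar α) = 2 * α ^ ((5:ℝ)/4) ∧
      L12 α (θstar α) = 2 * α ^ ((5:ℝ)/4)) ∧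
    (∀ θ : ℝ, θstar α < θ → L01 θ < L02 α θ ∧ L02 α θ < L12 α θ) ∧
    (∀ θ : ℝ, 0 < θ → Ld θ < L01 θ) := by
  obtain ⟨a, ha_def⟩ : ∃ x : ℝ, x = Real.sqrt α := ⟨_, rfl⟩
  have ha : 0 < a := ha_def ▸ Real.sqrt_pos.mpr hα
  have ha2 : a^2 = α := ha_def ▸ Real.sq_sqrt hα.le
  obtain ⟨b, hb_def⟩ : ∃ x : ℝ, x = Real.sqrt a := ⟨_, rfl⟩
  have hb : 0 < b := hb_def ▸ Real.sqrt_pos.mpr ha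
  have hb2 : b^2 = a := hb_def ▸ Real.sq_sqrt ha.le
  have h54 : α ^ ((5:ℝ)/4) = b^5 := by rw [rfq hα, ← ha_def, ← hb_def]
  obtain ⟨c, hc_def⟩ : ∃ x : ℝ, x = Real.sqrt 5 := ⟨_, rfl⟩
  have hc : 0 < c := hc_def ▸ Real.sqrt_pos.mpr (by norm_num)
  have hc2 : c^2 = 5 := hc_def ▸ Real.sq_sqrt (by norm_num)
  have hfh : (5:ℝ) ^ ((5:ℝ)/2) = c^5 := by rw [rfh, ← hc_def]
  have hθs : θstar α = 5/(4*a) := by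
    rw [θstar, rneg_half hα, ← ha_def]
    field_simp
  have hθspos : 0 < θstar α := by rw [hθs]; positivity
  refine ⟨⟨?_, ?_, ?_⟩, ?_, ?_⟩
  · -- L01 θ* = 2 α^{5/4}
    have hpos : (0:ℝ) < 5/(4*a) := by positivity
    obtain ⟨u, hu_def⟩ : ∃ x : ℝ, x = Real.sqrt (5/(4*a)) := ⟨_, rfl⟩
    have hu : 0 < u := hu_def ▸ Real.sqrt_pos.mpr hpos
    have hu2 : u^2 = 5/(4*a) := hu_def ▸ Real.sq_sqrt hpos.le
    have hcu : c = 2*b*u := by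
      have h5 : (2*b*u)^2 = 5 := by
        rw [show (2*b*u)^2 = 4*b^2*u^2 by ring, hb2, hu2]; field_simp
      rw [hc_def, ← h5, Real.sqrt_sq (by positivity)]
    rw [L01, hθs, rneg_fh hpos, hfh, ← hu_def, h54, hcu]
    field_simp
    ring
  · -- L02 θ* = 2 α^{5/4}
    have e : Real.sqrt α * θstar α - 1 = 1/4 := by
      rw [hθs, ← ha_def]; field_simp; ring
    rw [L02, e, rneg_half (by norm_num), h54,
      show (1/4:ℝ) = (1/2)^2 by norm_num, Real.sqrt_sq (by norm_num)]
    norm_num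
    ring
  · -- L12 θ* = 2 α^{5/4}
    have e1 : α*(α*(θstar α)^2 - 1) = ((3/4)*a)^2 := by
      rw [hθs, ← ha2]; field_simp; ring
    have e2 : 2*α^3*(θstar α) + 2*α^2*((3/4)*a) = (2*b^5)^2 := by
      rw [hθs, ← ha2, ← hb2]; field_simp; ring
    rw [L12, e1, Real.sqrt_sq (by positivity), e2, Real.sqrt_sq (by positivity), h54]
  · -- comparisons for θ > θ*
    intro θ hθ
    have hθpos : 0 < θ := lt_trans hθspos hθ
    obtain ⟨t, htdef⟩ : ∃ x : ℝ, x = a * θ := ⟨_, rfl⟩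
    have ht : 5/4 < t := by
      rw [hθs] at hθ
      rw [htdef]
      calc (5/4:ℝ) = a * (5/(4*a)) := by field_simp
      _ < a * θ := by exact mul_lt_mul_of_pos_left hθ ha
    have ht1 : (0:ℝ) < t - 1 := by linarith
    have ht0 : (0:ℝ) < t := by linarith
    obtain ⟨w, hw_def⟩ : ∃ x : ℝ, x = Real.sqrt (t-1) := ⟨_, rfl⟩
    have hw : 0 < w := hw_def ▸ Real.sqrt_pos.mpr ht1
    have hw2 : w^2 = t-1 := hw_def ▸ Real.sq_sqrt ht1.le
    obtain ⟨v, hv_def⟩ : ∃ x : ℝ, x = Real.sqrt θ := ⟨_, rfl⟩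
    have hv : 0 < v := hv_def ▸ Real.sqrt_pos.mpr hθpos
    have hv2 : v^2 = θ := hv_def ▸ Real.sq_sqrt hθpos.le
    have hbv2 : (b*v)^2 = t := by rw [mul_pow, hb2, hv2, htdef]
    have hsw : Real.sqrt α * θ - 1 = t - 1 := by rw [← ha_def, htdef]
    constructor
    · -- L01 < L02
      have key1 : 3125*(t-1) < 256*t^5 := by
        have h45 : 0 < 4*t-5 := by linarith
        have cub : 0 < 16*t^3+40*t^2+75*t+125 := by
          linarith [pow_pos ht0 3, pow_pos ht0 2]
        linarith [mul_pos (mul_pos h45 h45) cub]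
      have main : c^5*w < 16*(b^5*v^5) := by
        have hL : (c^5*w)^2 = 3125*(t-1) := by
          calc (c^5*w)^2 = (c^2)^5 * w^2 := by ring
          _ = 3125*(t-1) := by rw [hc2, hw2]; norm_num
        have hR : (16*(b^5*v^5))^2 = 256*t^5 := by
          calc (16*(b^5*v^5))^2 = 256*((b*v)^2)^5 := by ring
          _ = 256*t^5 := by rw [hbv2]
        have hlt : (c^5*w)^2 < (16*(b^5*v^5))^2 := by rw [hL, hR]; exact key1
        exact lt_of_pow_lt_pow_left₀ 2 (by positivity) hlt
      rw [L01, L02, rneg_fh hθpos, hfh, ← hv_def, h54, hsw, rneg_half ht1, ← hw_def]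
      rw [show c^5/16 * (v^5)⁻¹ = c^5/(16*v^5) by field_simp,
        show b^5 * w⁻¹ = b^5/w from (div_eq_mul_inv _ _).symm,
        div_lt_div_iff₀ (by positivity) hw]
      linarith [main]
    · -- L02 < L12
      have hs1 : (0:ℝ) < t^2 - 1 := by nlinarith
      obtain ⟨s, hs_def⟩ : ∃ x : ℝ, x = Real.sqrt (t^2-1) := ⟨_, rfl⟩
      have hs : 0 < s := hs_def ▸ Real.sqrt_pos.mpr hs1
      have hs2 : s^2 = t^2-1 := hs_def ▸ Real.sq_sqrt hs1.le
      have e3 : α*(α*θ^2-1) = (a*s)^2 := by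
        rw [mul_pow, hs2, htdef, ← ha2]; ring
      have e4 : 2*α^3*θ + 2*α^2*(a*s) = 2*a^5*(t+s) := by
        rw [htdef, ← ha2]; ring
      have key2 : 1 < 2*(t-1)*(t+s) := by
        have hAB : (2*(t-1)*s)^2 = (2*t^2-2*t-1)^2 + (4*t-5) := by
          rw [show (2*(t-1)*s)^2 = 4*(t-1)^2*s^2 by ring, hs2]; ring
        have hA0 : 0 ≤ 2*(t-1)*s := by
          have := mul_nonneg ht1.le hs.le; linarith
        rcases le_or_gt 0 (2*t^2-2*t-1) with hB | hB
        · have hApos : 0 < 2*(t-1)*s := by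
            have := mul_pos ht1 hs; linarith
          linarith
        · have hsq : (-(2*t^2-2*t-1))^2 < (2*(t-1)*s)^2 := by
            rw [hAB]; have : (-(2*t^2-2*t-1))^2 = (2*t^2-2*t-1)^2 := by ring
            rw [this]; linarith
          have := lt_of_pow_lt_pow_left₀ 2 hA0 hsq
          linarith
      rw [L02, L12, e3, Real.sqrt_sq (by positivity), e4, h54, hsw,
        rneg_half ht1, ← hw_def]
      rw [Real.lt_sqrt (by positivity)]
      have hL : (b^5 * w⁻¹)^2 = a^5 / (t-1) := by
        rw [show (b^5*w⁻¹)^2 = (b^2)^5 * (w^2)⁻¹ by ring, hb2, hw2]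
        field_simp
      rw [hL, div_lt_iff₀ ht1]
      have := mul_lt_mul_of_pos_left key2 (pow_pos ha 5)
      linarith
  · -- Ld < L01
    intro θ hθ
    obtain ⟨d, hd_def⟩ : ∃ x : ℝ, x = Real.sqrt (5/3:ℝ) := ⟨_, rfl⟩
    have hd : 0 ≤ d := hd_def ▸ Real.sqrt_nonneg _
    have hd2 : d^2 = 5/3 := hd_def ▸ Real.sq_sqrt (by norm_num)
    have hd13 : d < 1.3 := by nlinarith
    have hc2' : 2 ≤ c := by nlinarith
    have hc5 : c^5 = 25*c := by
      calc c^5 = c*(c^2)^2 := by ring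
      _ = 25*c := by rw [hc2]; ring
    have hconst : 25/24*d < c^5/16 := by rw [hc5]; nlinarith
    have hp : 0 < θ ^ (-(5:ℝ)/2) := Real.rpow_pos_of_pos hθ _
    rw [Ld, L01, hfh, ← hd_def]
    exact mul_lt_mul_of_pos_right hconst hp
end

section
/- Fix L > 0 and let 0 < θ₁ < θ₂ be such that L > L_d(θ₁) (hence also L > L_d(θ₂), since L_d is decreasing). Then X_m(θ₁, L) − (θ₁ − α^2/L^2) < X_m(θ₂, L) − (θ₂ − α^2/L^2); that is, θ ↦ X_m(θ, L) − θ̃(θ, L) is strictly increasing in θ on {θ > 0 : L > L_d(θ)}. -/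
open Real Set

set_option maxHeartbeats 1000000

/-- For fixed `L > 0` and `0 < θ₁ < θ₂` with `L > L_d(θ₁)` (hence `L > L_d(θ₂)`),
writing `X_m(θᵢ, L)` for the unique point of `(2θᵢ/5, θᵢ)` where `(1/2)(θᵢ - X)^(-3/2) = 2LX`,
one has `X_m(θ₁, L) - θ̃(θ₁, L) < X_m(θ₂, L) - θ̃(θ₂, L)` where `θ̃(θ, L) = θ - α²/L²`;
i.e. `θ ↦ X_m(θ, L) - θ̃(θ, L)` is strictly increasing. -/
theorem stmt_7 (α L θ₁ θ₂ Xm₁ Xm₂ : ℝ) (hα : 0 < α) (hL0 : 0 < L)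
    (hθ₁ : 0 < θ₁) (hθ₁₂ : θ₁ < θ₂) (hL : Ld θ₁ < L)
    (hXm₁ : Xm₁ ∈ Ioo (2*θ₁/5) θ₁)
    (hXm₁' : (1/2) * (θ₁ - Xm₁) ^ (-(3:ℝ)/2) = 2 * L * Xm₁)
    (hXm₂ : Xm₂ ∈ Ioo (2*θ₂/5) θ₂)
    (hXm₂' : (1/2) * (θ₂ - Xm₂) ^ (-(3:ℝ)/2) = 2 * L * Xm₂) :
    Xm₁ - (θ₁ - α^2/L^2) < Xm₂ - (θ₂ - α^2/L^2) := by
  obtain ⟨hX1l, hX1r⟩ := hXm₁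
  obtain ⟨hX2l, hX2r⟩ := hXm₂
  have hu₁0 : 0 < θ₁ - Xm₁ := by linarith
  have hu₂0 : 0 < θ₂ - Xm₂ := by linarith
  set s₁ := Real.sqrt (θ₁ - Xm₁) with hs₁def
  set s₂ := Real.sqrt (θ₂ - Xm₂) with hs₂def
  have hs₁0 : 0 < s₁ := Real.sqrt_pos.mpr hu₁0
  have hs₂0 : 0 < s₂ := Real.sqrt_pos.mpr hu₂0
  have hs₁sq : s₁^2 = θ₁ - Xm₁ := Real.sq_sqrt hu₁0.le
  have hs₂sq : s₂^2 = θ₂ - Xm₂ := Real.sq_sqrt hu₂0.le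
  have hr : ∀ u : ℝ, 0 < u → u ^ (-(3:ℝ)/2) = ((Real.sqrt u)^3)⁻¹ := by
    intro u hu
    rw [show (-(3:ℝ)/2) = (1/2) * (-3) by ring, Real.rpow_mul hu.le,
      ← Real.sqrt_eq_rpow, show (-3:ℝ) = ((-3:ℤ):ℝ) by norm_num,
      Real.rpow_intCast]
    norm_num
  rw [hr _ hu₁0] at hXm₁'
  rw [hr _ hu₂0] at hXm₂'
  have e₁ : 4 * L * Xm₁ * s₁^3 = 1 := by
    have h3 : (s₁:ℝ)^3 ≠ 0 := by positivity
    field_simp at hXm₁'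
    linarith
  have e₂ : 4 * L * Xm₂ * s₂^3 = 1 := by
    have h3 : (s₂:ℝ)^3 ≠ 0 := by positivity
    field_simp at hXm₂'
    linarith
  have hθ₁e : θ₁ = Xm₁ + s₁^2 := by rw [hs₁sq]; ring
  have hθ₂e : θ₂ = Xm₂ + s₂^2 := by rw [hs₂sq]; ring
  have c₂ : 2 * s₂^2 < 3 * Xm₂ := by linarith
  have B : 8 * L * s₂^5 < 3 := by
    nlinarith [mul_pos hL0 (pow_pos hs₂0 5), mul_pos hs₂0 hs₂0]
  have hgoal : s₂^2 < s₁^2 → Xm₁ - (θ₁ - α^2/L^2) < Xm₂ - (θ₂ - α^2/L^2) := by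
    intro h; linarith
  apply hgoal
  by_contra hcon
  push_neg at hcon
  have hs12 : s₁ ≤ s₂ := by nlinarith
  have hd : 0 < (Xm₂ + s₂^2) - (Xm₁ + s₁^2) := by linarith
  have h4 : (0:ℝ) < 4*L*s₁^3*s₂^3 := by positivity
  have t₁ : 4*L*s₁^3*s₂^3*Xm₁ = s₂^3 := by linear_combination s₂^3 * e₁
  have t₂ : 4*L*s₁^3*s₂^3*Xm₂ = s₁^3 := by linear_combination s₁^3 * e₂
  have A : 0 < s₁^3 - s₂^3 + 4*L*s₁^3*s₂^3*(s₂^2 - s₁^2) := by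
    nlinarith [mul_pos h4 hd]
  have fact : 2*s₂^5 - 5*s₁^3*s₂^2 + 3*s₁^5 ≥ 0 := by
    nlinarith [mul_nonneg (sq_nonneg (s₂ - s₁))
      (by positivity : (0:ℝ) ≤ 3*s₁^3 + 6*s₁^2*s₂ + 4*s₁*s₂^2 + 2*s₂^3)]
  have hm : (0:ℝ) ≤ s₁^3*(s₂^2 - s₁^2) := mul_nonneg (by positivity) (by linarith)
  have P1 : (0:ℝ) < 2*s₂^2 * (s₁^3 - s₂^3 + 4*L*s₁^3*s₂^3*(s₂^2 - s₁^2)) :=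
    mul_pos (by positivity) A
  have P2 : 8*L*s₂^5 * (s₁^3*(s₂^2 - s₁^2)) ≤ 3 * (s₁^3*(s₂^2 - s₁^2)) :=
    mul_le_mul_of_nonneg_right B.le hm
  linarith [P1, P2, fact]
end

section
/- Let θ > 0 and L = L_01(θ). Then L > L_d(θ), X_m(θ, L) = 4θ/5, f(4θ/5) = 0 = f(0), and X_m(θ, L) − θ̃ = (θ/5)·((4^4·α^2/5^4)·θ^4 − 1); consequently X_m < θ̃ if 0 < θ < θ*, X_m = θ̃ if θ = θ*, and X_m > θ̃ if θ > θ*. -/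
open Real Set

lemma sq_rpow_half (x : ℝ) (hx : 0 ≤ x) (r : ℝ) : (x ^ (r/2))^2 = x ^ r := by
  rw [← Real.rpow_natCast (x ^ (r/2)) 2, ← Real.rpow_mul hx]
  norm_num

lemma sq_rpow_neg_half (x : ℝ) (hx : 0 < x) (n : ℕ) : (x ^ (-(n:ℝ)/2))^2 = (x^n)⁻¹ := by
  rw [sq_rpow_half x hx.le, Real.rpow_neg hx.le, Real.rpow_natCast]

lemma eq_of_sq (a b : ℝ) (ha : 0 ≤ a) (hb : 0 ≤ b) (h : a^2 = b^2) : a = b := by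
  nlinarith [sq_nonneg (a - b), sq_nonneg (a + b)]

lemma poly_pos (θ X : ℝ) (hθ : 0 < θ) (h1 : 2*θ/5 < X) (h2 : X < θ) :
    625*X^4 - 1375*X^3*θ + 775*X^2*θ^2 - 5*X*θ^3 - 4*θ^4 > 0 := by
  nlinarith [mul_pos (sub_pos.mpr h1) (sub_pos.mpr h2), sq_nonneg (X - θ),
    sq_nonneg (5*X - 2*θ), sq_nonneg (5*X - 4*θ), mul_pos hθ hθ,
    sq_nonneg (25*X^2 - 20*X*θ), mul_pos (mul_pos hθ hθ) hθ]

set_option maxHeartbeats 1600000 in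
/-- For `θ > 0` and `L = L_01(θ)`: `L > L_d(θ)`, `X_m(θ, L) = 4θ/5` (it lies in
`(2θ/5, θ)`, satisfies the critical-point equation and is the unique such point),
`f(4θ/5) = 0 = f(0)`, and `X_m - θ̃ = (θ/5)((4⁴α²/5⁴)θ⁴ - 1)`; consequently `X_m < θ̃` for
`θ < θ*`, `X_m = θ̃` for `θ = θ*`, and `X_m > θ̃` for `θ > θ*`. -/
theorem stmt_8 (α θ L : ℝ) (hα : 0 < α) (hθ : 0 < θ) (hL : L = L01 θ) :
    Ld θ < L ∧
    (4*θ/5 ∈ Ioo (2*θ/5) θ ∧ (1/2) * (θ - 4*θ/5) ^ (-(3:ℝ)/2) = 2 * L * (4*θ/5)) ∧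
    (∀ X ∈ Ioo (2*θ/5) θ, (1/2) * (θ - X) ^ (-(3:ℝ)/2) = 2 * L * X → X = 4*θ/5) ∧
    f θ L (4*θ/5) = 0 ∧ f θ L 0 = 0 ∧
    4*θ/5 - (θ - α^2/L^2) = (θ/5) * ((4^4 * α^2 / 5^4) * θ^4 - 1) ∧
    (θ < θstar α → 4*θ/5 < θ - α^2/L^2) ∧
    (θ = θstar α → 4*θ/5 = θ - α^2/L^2) ∧
    (θstar α < θ → θ - α^2/L^2 < 4*θ/5) := by
  have hθ5 : (0:ℝ) < θ^5 := by positivity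
  have hA2 : (((5:ℝ) ^ ((5:ℝ)/2)))^2 = 3125 := by
    rw [sq_rpow_half 5 (by norm_num)]
    rw [show (5:ℝ) = ((5:ℕ):ℝ) by norm_num, Real.rpow_natCast]
    norm_num
  have hT2 : (θ ^ (-(5:ℝ)/2))^2 = (θ^5)⁻¹ := by
    rw [show (-(5:ℝ)) = -((5:ℕ):ℝ) by norm_num] at *
    exact sq_rpow_neg_half θ hθ 5
  have hApos : (0:ℝ) < (5:ℝ) ^ ((5:ℝ)/2) := Real.rpow_pos_of_pos (by norm_num) _
  have hTpos : (0:ℝ) < θ ^ (-(5:ℝ)/2) := Real.rpow_pos_of_pos hθ _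
  have hLpos : 0 < L := by
    rw [hL]; exact mul_pos (by positivity) hTpos
  have hL2 : L^2 = 3125 / (256 * θ^5) := by
    rw [hL]; unfold L01
    rw [mul_pow, div_pow, hA2, hT2]
    field_simp
    norm_num
  have hAL : α^2/L^2 = 256*α^2*θ^5/3125 := by
    rw [hL2]; field_simp
  refine ⟨?_, ⟨⟨by linarith, by linarith⟩, ?_⟩, ?_, ?_, ?_, ?_, ?_, ?_, ?_⟩
  · -- Ld θ < L
    rw [hL]; unfold Ld L01
    have hs : (0:ℝ) ≤ Real.sqrt (5/3) := Real.sqrt_nonneg _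
    apply lt_of_pow_lt_pow_left₀ 2 (by positivity)
    simp only [mul_pow, div_pow]
    rw [hA2, hT2, Real.sq_sqrt (by norm_num : (0:ℝ) ≤ 5/3)]
    have hi : (0:ℝ) < (θ^5)⁻¹ := inv_pos.mpr hθ5
    nlinarith [hi]
  · -- critical point equation at 4θ/5
    have h45 : θ - 4*θ/5 = θ/5 := by ring
    rw [h45]
    have hC2 : ((θ/5) ^ (-(3:ℝ)/2))^2 = 125/θ^3 := by
      rw [show (-(3:ℝ)) = -((3:ℕ):ℝ) by norm_num, sq_rpow_neg_half (θ/5) (by positivity) 3]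
      field_simp; ring
    apply eq_of_sq
    · positivity
    · positivity
    · rw [mul_pow, hC2, mul_pow, mul_pow, hL2]
      field_simp; ring
  · -- uniqueness
    intro X hX heq
    obtain ⟨hX1, hX2⟩ := hX
    have hXpos : 0 < X := by linarith
    have hDpos : 0 < θ - X := by linarith
    have hD2 : ((θ - X) ^ (-(3:ℝ)/2))^2 = ((θ-X)^3)⁻¹ := by
      rw [show (-(3:ℝ)) = -((3:ℕ):ℝ) by norm_num]
      exact sq_rpow_neg_half (θ - X) hDpos 3
    have h2 : ((1/2) * (θ - X) ^ (-(3:ℝ)/2))^2 = (2 * L * X)^2 := by rw [heq]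
    rw [mul_pow, hD2, mul_pow, mul_pow, hL2] at h2
    have hD3 : (0:ℝ) < (θ - X)^3 := by positivity
    have hpoly : 3125 * X^2 * (θ - X)^3 = 16 * θ^5 := by
      field_simp at h2
      nlinarith [h2]
    have hr := poly_pos θ X hθ hX1 hX2
    have hfac : (5*X - 4*θ) * (-(625*X^4) + 1375*X^3*θ - 775*X^2*θ^2 + 5*X*θ^3 + 4*θ^4) = 0 := by
      linear_combination hpoly
    rcases mul_eq_zero.mp hfac with h | h
    · linarith
    · linarith
  · -- f(4θ/5) = 0
    unfold f
    rw [if_neg (by positivity : ¬ (4*θ/5 = 0))]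
    have h45 : θ - 4*θ/5 = θ/5 := by ring
    rw [h45, sub_eq_zero]
    have hC2 : ((θ/5) ^ (-(1:ℝ)/2))^2 = 5/θ := by
      rw [show (-(1:ℝ)) = -((1:ℕ):ℝ) by norm_num, sq_rpow_neg_half (θ/5) (by positivity) 1]
      field_simp
    apply eq_of_sq
    · positivity
    · positivity
    · rw [hC2, mul_pow, hL2]
      field_simp; ring
  · -- f 0 = 0
    unfold f; simp
  · -- identity
    rw [hAL]; ring
  · -- θ < θstar
    intro hlt
    have hθ4 : (θstar α)^4 = 625/(256*α^2) := by
      unfold θstar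
      rw [mul_pow]
      have h1 := sq_rpow_half α hα.le (-(1:ℝ))
      have h2 : (α ^ (-(1:ℝ)/2))^4 = ((α ^ (-(1:ℝ)/2))^2)^2 := by ring
      rw [h2, h1, Real.rpow_neg_one]
      field_simp
      ring
    have hp : θ^4 < (θstar α)^4 := by
      apply pow_lt_pow_left₀ hlt hθ.le; norm_num
    rw [hθ4] at hp
    have h256 : 256*α^2*θ^4 < 625 := by
      rw [lt_div_iff₀ (by positivity)] at hp; nlinarith
    have h' := mul_lt_mul_of_pos_right h256 hθ
    have hring : 256*α^2*θ^4*θ = 256*α^2*θ^5 := by ring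
    rw [hAL]
    linarith [h']
  · -- θ = θstar
    intro heq
    have hθ4 : θ^4 = 625/(256*α^2) := by
      rw [heq]; unfold θstar
      rw [mul_pow]
      have h1 := sq_rpow_half α hα.le (-(1:ℝ))
      have h2 : (α ^ (-(1:ℝ)/2))^4 = ((α ^ (-(1:ℝ)/2))^2)^2 := by ring
      rw [h2, h1, Real.rpow_neg_one]
      field_simp
      ring
    have h256 : 256*α^2*θ^4 = 625 := by
      rw [hθ4]; field_simp
    have h5 : 256*α^2*θ^5 = 625*θ := by linear_combination θ * h256
    rw [hAL]
    linarith [h5]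
  · -- θstar < θ
    intro hlt
    have hθstarpos : 0 < θstar α := by
      unfold θstar
      exact mul_pos (by norm_num) (Real.rpow_pos_of_pos hα _)
    have hθ4 : (θstar α)^4 = 625/(256*α^2) := by
      unfold θstar
      rw [mul_pow]
      have h1 := sq_rpow_half α hα.le (-(1:ℝ))
      have h2 : (α ^ (-(1:ℝ)/2))^4 = ((α ^ (-(1:ℝ)/2))^2)^2 := by ring
      rw [h2, h1, Real.rpow_neg_one]
      field_simp
      ring
    have hp : (θstar α)^4 < θ^4 := by
      apply pow_lt_pow_left₀ hlt hθstarpos.le; norm_num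
    rw [hθ4] at hp
    have h256 : 625 < 256*α^2*θ^4 := by
      rw [div_lt_iff₀ (by positivity)] at hp; nlinarith
    have h' := mul_lt_mul_of_pos_right h256 hθ
    have hring : 256*α^2*θ^4*θ = 256*α^2*θ^5 := by ring
    rw [hAL]
    linarith [h']
end

section
/- Write G(θ, L) := f(θ̃(θ, L), θ, L) where f(X, θ, L) = (θ − X)^(−1/2) − L·X^2 and θ̃(θ, L) = θ − α^2/L^2. (i) Whenever θ̃(θ, L) > 0 one has the identity G(θ, L) = L·(1/α − θ̃^2) and ∂G/∂θ = −2·L·θ̃ < 0. (ii) For θ > θ* and L > L_02(θ), one has θ̃ > α^(−1/2) > 0 and ∂G/∂L = 1/α − θ̃^2 − 4·α^2·θ̃/L^2 < 0. -/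
open Real Set

/-!
On the curve `θ - X = α²/L²` the singular term `(θ - X)^(-1/2)` is exactly `L/α`, so away from
`θ̃ = 0` (where the junk branch `f(0) = 0` would intervene) `G(θ, L) = L/α - L·θ̃²` is an explicit
rational function of `θ` and `L`, and both derivatives are computed from this closed form.
The hypothesis `L > L_02(θ)` unfolds to `α²/L² < θ - α^(-1/2)`, i.e. `θ̃ > α^(-1/2)`, hence
`θ̃² > 1/α`, which makes `∂G/∂L` negative.
-/

lemma rpow_neg_half_eq_inv_sqrt {x : ℝ} (hx : 0 ≤ x) : x ^ (-(1:ℝ)/2) = (√x)⁻¹ := by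
  rw [neg_div, rpow_neg hx, sqrt_eq_rpow]

lemma f_eq_of_sub_eq {α θ L x : ℝ} (hα : 0 < α) (hL : 0 < L) (hx : x ≠ 0)
    (hθx : θ - x = α^2/L^2) : f θ L x = L/α - L * x^2 := by
  rw [f, if_neg hx, hθx, rpow_neg_half_eq_inv_sqrt (by positivity), sqrt_div' _ (by positivity),
    sqrt_sq hα.le, sqrt_sq hL.le, inv_div]

lemma hasDerivAt_f_along_theta {α θ L : ℝ} (hα : 0 < α) (hL : 0 < L) (hθ : 0 < θ - α^2/L^2) :
    HasDerivAt (fun t => f t L (t - α^2/L^2)) (-2*L*(θ - α^2/L^2)) θ := by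
  have hpoly : HasDerivAt (fun t => L/α - L*(t - α^2/L^2)^2) (-2*L*(θ - α^2/L^2)) θ := by
    refine ((((hasDerivAt_id θ).sub_const (α^2/L^2)).pow 2).const_mul L |>.const_sub (L/α))
      |>.congr_deriv ?_
    simp only [id]
    ring
  refine hpoly.congr_of_eventuallyEq ?_
  filter_upwards [eventually_gt_nhds (sub_pos.1 hθ)] with t ht
  exact f_eq_of_sub_eq hα hL (sub_pos.2 ht).ne' (by ring)

lemma hasDerivAt_f_along_L {α θ L : ℝ} (hα : 0 < α) (hL : 0 < L) (hθ : 0 < θ - α^2/L^2) :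
    HasDerivAt (fun l => f θ l (θ - α^2/l^2))
      (1/α - (θ - α^2/L^2)^2 - 4*α^2*(θ - α^2/L^2)/L^2) L := by
  have hinner : HasDerivAt (fun l => θ - α^2/l^2) (2*α^2/L^3) L := by
    refine ((hasDerivAt_const L (α^2)).div (hasDerivAt_pow 2 L) (by positivity)).const_sub θ
      |>.congr_deriv ?_
    field_simp
    ring
  have hpoly : HasDerivAt (fun l => l/α - l*(θ - α^2/l^2)^2)
      (1/α - (θ - α^2/L^2)^2 - 4*α^2*(θ - α^2/L^2)/L^2) L := by
    refine ((hasDerivAt_id L).div_const α).sub ((hasDerivAt_id L).mul (hinner.pow 2))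
      |>.congr_deriv ?_
    norm_num
    field_simp
    ring
  refine hpoly.congr_of_eventuallyEq ?_
  have hcont : ContinuousAt (fun l => θ - α^2/l^2) L := by fun_prop (disch := positivity)
  filter_upwards [eventually_gt_nhds hL, hcont.eventually (eventually_gt_nhds hθ)]
    with l hl hlθ
  exact f_eq_of_sub_eq hα hl hlθ.ne' (by ring)

lemma L02_sq {α θ : ℝ} (hα : 0 ≤ α) (hs : 0 ≤ √α * θ - 1) :
    L02 α θ ^ 2 = α^2 * √α / (√α * θ - 1) := by
  rw [L02, mul_pow, ← rpow_mul_natCast hα, ← rpow_mul_natCast hs, sqrt_eq_rpow,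
    ← rpow_natCast α 2, ← rpow_add' hα (by norm_num)]
  norm_num
  rw [rpow_neg_one, ← div_eq_mul_inv]

lemma inv_sqrt_lt_of_L02_lt {α θ L : ℝ} (hα : 0 < α) (hθ : θstar α < θ) (hL : L02 α θ < L) :
    (√α)⁻¹ < θ - α^2/L^2 := by
  have hs : 0 < √α := sqrt_pos.2 hα
  rw [θstar, rpow_neg_half_eq_inv_sqrt hα.le] at hθ
  have hsθ : 0 < √α * θ - 1 := by
    have := mul_lt_mul_of_pos_left hθ hs
    field_simp at this
    linarith
  have hL02 : 0 ≤ L02 α θ := by unfold L02; positivity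
  have hL2 : α^2 * √α / (√α * θ - 1) < L^2 := by
    rw [← L02_sq hα.le hsθ.le]
    exact pow_lt_pow_left₀ hL hL02 two_ne_zero
  have hLpos : 0 < L := hL02.trans_lt hL
  rw [div_lt_iff₀ hsθ] at hL2
  have hgap : θ - α^2/L^2 - (√α)⁻¹ = (L^2 * (√α * θ - 1) - α^2 * √α) / (√α * L^2) := by
    field_simp
    ring
  have := div_pos (sub_pos.2 hL2) (by positivity : 0 < √α * L^2)
  linarith

theorem stmt_12_general (α θ L : ℝ) (hα : 0 < α) (hL : 0 < L) :
    (0 < θ - α^2/L^2 →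
      f θ L (θ - α^2/L^2) = L * (1/α - (θ - α^2/L^2)^2) ∧
      HasDerivAt (fun t => f t L (t - α^2/L^2)) (-2*L*(θ - α^2/L^2)) θ ∧
      -2*L*(θ - α^2/L^2) < 0) ∧
    (θstar α < θ → L02 α θ < L →
      α ^ (-(1:ℝ)/2) < θ - α^2/L^2 ∧ (0:ℝ) < α ^ (-(1:ℝ)/2) ∧
      HasDerivAt (fun l => f θ l (θ - α^2/l^2))
        (1/α - (θ - α^2/L^2)^2 - 4*α^2*(θ - α^2/L^2)/L^2) L ∧
      1/α - (θ - α^2/L^2)^2 - 4*α^2*(θ - α^2/L^2)/L^2 < 0) := by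
  refine ⟨fun hθ => ⟨?_, hasDerivAt_f_along_theta hα hL hθ, by nlinarith⟩, fun hθ hL02 => ?_⟩
  · rw [f_eq_of_sub_eq hα hL hθ.ne' (by ring)]
    ring
  have hinv := inv_sqrt_lt_of_L02_lt hα hθ hL02
  have hinv_pos : 0 < (√α)⁻¹ := inv_pos.2 (sqrt_pos.2 hα)
  have hθ' : 0 < θ - α^2/L^2 := hinv_pos.trans hinv
  rw [rpow_neg_half_eq_inv_sqrt hα.le]
  refine ⟨hinv, hinv_pos, hasDerivAt_f_along_L hα hL hθ', ?_⟩
  have hsq : 1/α < (θ - α^2/L^2)^2 :=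
    calc 1/α = (√α)⁻¹ ^ 2 := by rw [inv_pow, sq_sqrt hα.le, one_div]
      _ < _ := pow_lt_pow_left₀ hinv hinv_pos.le two_ne_zero
  have : 0 < 4*α^2*(θ - α^2/L^2)/L^2 := by positivity
  linarith

/-- Write `G(θ, L) = f(θ̃(θ, L), θ, L)` with `θ̃ = θ - α²/L²`.
(i) If `θ̃ > 0` then `G(θ, L) = L(1/α - θ̃²)` and `∂G/∂θ = -2Lθ̃ < 0`.
(ii) For `θ > θ*` and `L > L_02(θ)`: `θ̃ > α^(-1/2) > 0` and
`∂G/∂L = 1/α - θ̃² - 4α²θ̃/L² < 0`. -/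
theorem stmt_12 (α θ L : ℝ) (hα : 0 < α) (hθ : 0 < θ) (hL : 0 < L) :
    (0 < θ - α^2/L^2 →
      f θ L (θ - α^2/L^2) = L * (1/α - (θ - α^2/L^2)^2) ∧
      HasDerivAt (fun t => f t L (t - α^2/L^2)) (-2*L*(θ - α^2/L^2)) θ ∧
      -2*L*(θ - α^2/L^2) < 0) ∧
    (θstar α < θ → L02 α θ < L →
      α ^ (-(1:ℝ)/2) < θ - α^2/L^2 ∧ (0:ℝ) < α ^ (-(1:ℝ)/2) ∧
      HasDerivAt (fun l => f θ l (θ - α^2/l^2))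
        (1/α - (θ - α^2/L^2)^2 - 4*α^2*(θ - α^2/L^2)/L^2) L ∧
      1/α - (θ - α^2/L^2)^2 - 4*α^2*(θ - α^2/L^2)/L^2 < 0) :=
  stmt_12_general α θ L hα hL
end

section
/- For every (θ, L) ∈ D_0, the point 0 is the unique global minimizer of f on D: f(X) > f(0) = 0 for every X ∈ D with X ≠ 0. -/
open Real Set

lemma rpow_sq' (x p : ℝ) (hx : 0 < x) : (x ^ p)^2 = x ^ (p + p) := by
  rw [sq, ← Real.rpow_add hx]

lemma rpow_five' (x : ℝ) : x ^ (5:ℝ) = x ^ 5 := by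
  rw [show (5:ℝ)=((5:ℕ):ℝ) by norm_num, Real.rpow_natCast]

lemma rpow_neg_half' (x : ℝ) (hx : 0 < x) : x ^ (-(1:ℝ)/2) = (Real.sqrt x)⁻¹ := by
  rw [show (-(1:ℝ)/2) = -(1/2) by ring, Real.rpow_neg hx.le, ← Real.sqrt_eq_rpow]

set_option maxHeartbeats 1000000 in
/-- For `(θ, L) ∈ D_0` (i.e. `0 < θ ≤ θ*` and `L < L_01(θ)`, or `θ > θ*` and
`L < L_02(θ)`), the point `0` is the unique global minimizer of `f` on `D = [0, θ̃⁺]`: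
`f(X) > f(0) = 0` for every `X ∈ D` with `X ≠ 0`. -/
theorem stmt_14 (α θ L : ℝ) (hα : 0 < α) (hθ : 0 < θ) (hL : 0 < L)
    (hD0 : (θ ≤ θstar α ∧ L < L01 θ) ∨ (θstar α < θ ∧ L < L02 α θ)) :
    f θ L 0 = 0 ∧
    (∀ X ∈ Icc (0:ℝ) (max (θ - α^2/L^2) 0), X ≠ 0 → 0 < f θ L X) := by
  refine ⟨by simp [f], ?_⟩
  rintro X ⟨hX0', hXle⟩ hX0
  have hXpos : 0 < X := lt_of_le_of_ne hX0' (Ne.symm hX0)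
  obtain ⟨b, hbdef⟩ : ∃ b', b' = θ - α^2/L^2 := ⟨_, rfl⟩
  rw [← hbdef] at hXle
  have hXb : X ≤ b := by
    rcases le_or_gt b 0 with h | h
    · rw [max_eq_right h] at hXle; linarith
    · rwa [max_eq_left h.le] at hXle
  have hbpos : 0 < b := lt_of_lt_of_le hXpos hXb
  have hq : 0 < α^2/L^2 := by positivity
  have hθX : 0 < θ - X := by
    have h := hXb
    rw [hbdef] at h
    linarith
  have hXθ : X < θ := by linarith
  -- main inequality
  have key : L^2 * (X^4 * (θ - X)) < 1 := by
    rcases hD0 with ⟨_, hL1⟩ | ⟨hθs, hL2⟩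
    · -- case 1 : L < L01 θ
      have hsq : L^2 < 3125/256 * (θ^5)⁻¹ := by
        have h1 : L01 θ ^ 2 = 3125/256 * (θ^5)⁻¹ := by
          unfold L01
          rw [mul_pow, div_pow, rpow_sq' _ _ (by norm_num : (0:ℝ)<5), rpow_sq' _ _ hθ,
            show (5:ℝ)/2 + 5/2 = 5 by ring, show (-(5:ℝ)/2 + -(5:ℝ)/2) = -5 by ring,
            rpow_five' 5, Real.rpow_neg hθ.le, rpow_five' θ]
          norm_num
        calc L^2 < L01 θ ^ 2 := by
              rw [sq, sq]; exact mul_lt_mul'' hL1 hL1 hL.le hL.le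
        _ = _ := h1
      have hpoly : 3125 * (X^4*(θ-X)) ≤ 256 * θ^5 := by
        nlinarith [mul_nonneg (sq_nonneg (5*X-4*θ))
          (show (0:ℝ) ≤ 125*X^3+75*X^2*θ+40*X*θ^2+16*θ^3 by positivity)]
      have hP : 0 < X^4*(θ-X) := by positivity
      have h2 : L^2 * (X^4*(θ-X)) < 3125/256*(θ^5)⁻¹ * (X^4*(θ-X)) :=
        mul_lt_mul_of_pos_right hsq hP
      have h3 : 3125/256*(θ^5)⁻¹ * (X^4*(θ-X)) ≤ 1 := by
        rw [show (3125:ℝ)/256*(θ^5)⁻¹*(X^4*(θ-X)) = 3125*(X^4*(θ-X))/(256*θ^5) by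
          field_simp, div_le_one (by positivity)]
        linarith
      linarith
    · -- case 2
      obtain ⟨s, hsdef⟩ : ∃ s', s' = Real.sqrt α := ⟨_, rfl⟩
      have hs : 0 < s := hsdef ▸ Real.sqrt_pos.2 hα
      have hs2 : s^2 = α := by rw [hsdef]; exact Real.sq_sqrt hα.le
      have hsθ : 5/4 < s * θ := by
        have h1 : θstar α = 5/4 * s⁻¹ := by
          unfold θstar
          rw [rpow_neg_half' _ hα, hsdef]
        rw [h1] at hθs
        have h2 : 5/4 * s⁻¹ * s < θ * s := mul_lt_mul_of_pos_right hθs hs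
        rw [mul_assoc, inv_mul_cancel₀ hs.ne'] at h2
        linarith [h2]
      have hden : 0 < s*θ - 1 := by linarith
      have hL2sq : L^2 < (α^2 * s) / (s*θ - 1) := by
        have h1 : L02 α θ ^ 2 = (α^2 * s) / (s*θ-1) := by
          unfold L02
          rw [hsdef, ← hsdef, mul_pow, rpow_sq' _ _ hα, rpow_sq' _ _ hden,
            show (5:ℝ)/4 + 5/4 = 2 + 1/2 by ring, show (-(1:ℝ)/2 + -(1:ℝ)/2) = -1 by ring,
            Real.rpow_add hα, Real.rpow_neg_one,
            show α ^ ((1:ℝ)/2) = s by rw [hsdef, Real.sqrt_eq_rpow],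
            show α ^ (2:ℝ) = α^2 by
              rw [show (2:ℝ)=((2:ℕ):ℝ) by norm_num, Real.rpow_natCast]]
          ring
        calc L^2 < L02 α θ ^ 2 := by
              rw [sq, sq]; exact mul_lt_mul'' hL2 hL2 hL.le hL.le
        _ = _ := h1
      have h4 : L^2 * (s*θ-1) < α^2 * s := (lt_div_iff₀ hden).1 hL2sq
      have hinv : L^2 * (α^2/L^2) = α^2 := by field_simp
      have hbs : s * b < 1 := by
        have h5 : L^2 * (s*b) < L^2 * 1 := by
          have he : L^2 * (s*b) = s*(L^2*θ) - s*(L^2*(α^2/L^2)) := by rw [hbdef]; ring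
          rw [he, hinv]
          nlinarith [h4]
        exact lt_of_mul_lt_mul_left h5 (by positivity)
      have hsb0 : 0 < s * b := mul_pos hs hbpos
      have hαb : α * b^2 < 1 := by
        have h7 : (s*b)*(s*b) < 1*1 := mul_lt_mul'' hbs hbs hsb0.le hsb0.le
        calc α * b^2 = (s*b)*(s*b) := by rw [← hs2]; ring
          _ < 1*1 := h7
          _ = 1 := one_mul 1
      have hb45 : b ≤ 4/5*θ := by
        have h6 : s*b < s*(4/5*θ) := by
          have : s*(4/5*θ) = 4/5*(s*θ) := by ring
          rw [this]; linarith
        exact (lt_of_mul_lt_mul_left h6 hs.le).le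
      have hbX : 0 ≤ b - X := sub_nonneg.2 hXb
      have hS34 : 0 ≤ b^3+b^2*X+b*X^2-3*X^3 := by
        nlinarith [mul_nonneg hbX (show (0:ℝ) ≤ b^2+b*X+X^2 by positivity),
          mul_nonneg (mul_nonneg hXpos.le hbX) (show (0:ℝ) ≤ b+X by positivity),
          mul_nonneg (sq_nonneg X) hbX]
      have h45b : (0:ℝ) ≤ 4/5*θ - b := by linarith
      have ht1 := mul_nonneg h45b (show (0:ℝ) ≤ b^3+b^2*X+b*X^2+X^3 by positivity)
      have ht2 := mul_nonneg hθ.le hS34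
      have ht3 := mul_nonneg h45b (pow_nonneg hXpos.le 3)
      have ht4 := mul_nonneg hbX (pow_nonneg hXpos.le 3)
      have hbr : 0 ≤ (θ-b)*(b^3+b^2*X+b*X^2+X^3) - X^4 := by linarith only [ht1, ht2, ht3, ht4]
      have hmono : X^4*(θ-X) ≤ b^4*(θ-b) := by nlinarith [mul_nonneg hbX hbr, hbX, hbr]
      have h6 : L^2*(b^4*(θ-b)) = α^2*b^4 := by
        rw [show θ - b = α^2/L^2 by rw [hbdef]; ring]
        field_simp
      have hαb0 : 0 < α * b^2 := mul_pos hα (pow_pos hbpos 2)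
      have h8 : (α*b^2)*(α*b^2) < 1*1 := mul_lt_mul'' hαb hαb hαb0.le hαb0.le
      calc L^2 * (X^4*(θ-X)) ≤ L^2*(b^4*(θ-b)) :=
            mul_le_mul_of_nonneg_left hmono (sq_nonneg L)
        _ = α^2*b^4 := h6
        _ = (α*b^2)*(α*b^2) := by ring
        _ < 1*1 := h8
        _ = 1 := one_mul 1
  -- conclude
  have hsqrt : 0 < Real.sqrt (θ - X) := Real.sqrt_pos.2 hθX
  have hid : (L*X^2*Real.sqrt (θ-X))*(L*X^2*Real.sqrt (θ-X)) = L^2*(X^4*(θ-X)) := by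
    have h := Real.sq_sqrt hθX.le
    nlinarith [h]
  have ha : L * X^2 * Real.sqrt (θ - X) < 1 := by
    by_contra hc
    push_neg at hc
    have h9 : 1*1 ≤ (L*X^2*Real.sqrt (θ-X))*(L*X^2*Real.sqrt (θ-X)) :=
      mul_le_mul hc hc zero_le_one (le_trans zero_le_one hc)
    rw [hid] at h9
    linarith
  have hfX : f θ L X = (θ - X)^(-(1:ℝ)/2) - L * X ^ 2 := by simp [f, hX0]
  rw [hfX, rpow_neg_half' _ hθX]
  have hlt : L * X^2 < (Real.sqrt (θ-X))⁻¹ := by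
    rw [show (Real.sqrt (θ-X))⁻¹ = 1 / Real.sqrt (θ-X) by ring, lt_div_iff₀ hsqrt]
    exact ha
  linarith
end

section
/- For every (θ, L) ∈ D_1, one has L > L_d(θ), the critical point X_m = X_m(θ, L) satisfies 0 < X_m < θ̃ (so X_m ∈ D) and f(X_m) < 0 = f(0), and X_m is the unique global minimizer of f on D: f(X) > f(X_m) for every X ∈ D with X ≠ X_m. -/
open Real Set

namespace Real

lemma rpow_neg_one_div_two {y : ℝ} (hy : 0 ≤ y) : y ^ (-(1:ℝ)/2) = (√y)⁻¹ := by
  rw [sqrt_eq_rpow, ← rpow_neg hy]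
  norm_num

lemma rpow_neg_three_div_two {y : ℝ} (hy : 0 ≤ y) : y ^ (-(3:ℝ)/2) = (√y ^ 3)⁻¹ := by
  rw [sqrt_eq_rpow, ← rpow_natCast, ← rpow_mul hy, ← rpow_neg hy]
  norm_num

lemma sq_rpow_div_two {x : ℝ} (hx : 0 ≤ x) (a : ℝ) : (x ^ (a / 2)) ^ 2 = x ^ a := by
  rw [← rpow_natCast, ← rpow_mul hx]
  norm_num

end Real

noncomputable section

/-- The critical points of `f` on `(0, θ)` are the solutions of `16 L² · critPoly θ X = 1`. -/
def critPoly (θ X : ℝ) : ℝ := X ^ 2 * (θ - X) ^ 3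

/-- `f` without its value `f(0) = 0`: the smooth branch on `(-∞, θ)`. -/
def energy (θ L X : ℝ) : ℝ := (θ - X) ^ (-(1:ℝ)/2) - L * X ^ 2

def energyDeriv (θ L X : ℝ) : ℝ := (1/2) * (θ - X) ^ (-(3:ℝ)/2) - 2 * L * X

end

section CritPoly

lemma hasDerivAt_critPoly (θ x : ℝ) :
    HasDerivAt (critPoly θ) (x * (θ - x) ^ 2 * (2 * θ - 5 * x)) x := by
  have h := (hasDerivAt_pow 2 x).mul (((hasDerivAt_id' x).const_sub θ).pow 3)
  exact h.congr_deriv (by simp only [Pi.pow_apply]; push_cast; ring)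

lemma continuous_critPoly (θ : ℝ) : Continuous (critPoly θ) := by
  unfold critPoly
  fun_prop

variable {θ : ℝ}

lemma critPoly_strictMonoOn : StrictMonoOn (critPoly θ) (Icc 0 (2 * θ / 5)) := by
  refine strictMonoOn_of_deriv_pos (convex_Icc _ _) (continuous_critPoly θ).continuousOn
    fun x hx ↦ ?_
  rw [interior_Icc] at hx
  rw [(hasDerivAt_critPoly θ x).deriv]
  have : 0 < θ - x := by linarith [hx.1, hx.2]
  exact mul_pos (mul_pos hx.1 (by positivity)) (by linarith [hx.2])

lemma critPoly_strictAntiOn : StrictAntiOn (critPoly θ) (Icc (2 * θ / 5) θ) := by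
  refine strictAntiOn_of_deriv_neg (convex_Icc _ _) (continuous_critPoly θ).continuousOn
    fun x hx ↦ ?_
  rw [interior_Icc] at hx
  rw [(hasDerivAt_critPoly θ x).deriv]
  have : 0 < θ - x := by linarith [hx.2]
  exact mul_neg_of_pos_of_neg (mul_pos (by linarith [hx.1, hx.2]) (by positivity))
    (by linarith [hx.1])

lemma min_critPoly_lt {a b y : ℝ} (ha : 0 ≤ a) (hay : a < y) (hyb : y < b) (hb : b ≤ θ) :
    min (critPoly θ a) (critPoly θ b) < critPoly θ y := by
  rcases le_total y (2 * θ / 5) with hy | hy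
  · exact min_lt_of_left_lt <|
      critPoly_strictMonoOn ⟨ha, hay.le.trans hy⟩ ⟨ha.trans hay.le, hy⟩ hay
  · exact min_lt_of_right_lt <|
      critPoly_strictAntiOn ⟨hy, hyb.le.trans hb⟩ ⟨hy.trans hyb.le, hb⟩ hyb

lemma exists_sixteen_mul_critPoly_eq_one {L : ℝ} (hθ : 0 < θ)
    (h : 1 < 16 * L ^ 2 * critPoly θ (2 * θ / 5)) :
    ∃ x ∈ Ioo (2 * θ / 5) θ, 16 * L ^ 2 * critPoly θ x = 1 := by
  have hcont : ContinuousOn (fun x ↦ 16 * L ^ 2 * critPoly θ x) (Icc (2 * θ / 5) θ) :=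
    (continuous_const.mul (continuous_critPoly θ)).continuousOn
  exact intermediate_value_Ioo' (by linarith) hcont ⟨by simp [critPoly], h⟩

end CritPoly

section Energy

variable {θ L x : ℝ}

lemma f_eq_energy (hx : x ≠ 0) : f θ L x = energy θ L x := if_neg hx

lemma hasDerivAt_energy (hx : x < θ) : HasDerivAt (energy θ L) (energyDeriv θ L x) x := by
  have h := (((hasDerivAt_id' x).const_sub θ).rpow_const (p := -(1:ℝ)/2)
    (Or.inl (sub_pos.2 hx).ne')).sub ((hasDerivAt_pow 2 x).const_mul L)
  refine h.congr_deriv ?_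
  rw [energyDeriv, show -(1:ℝ)/2 - 1 = -(3:ℝ)/2 by norm_num]
  push_cast
  ring

lemma energyDeriv_eq (hx : x < θ) :
    energyDeriv θ L x = (1 - 4 * L * x * √(θ - x) ^ 3) / (2 * √(θ - x) ^ 3) := by
  have : 0 < √(θ - x) := sqrt_pos.2 (sub_pos.2 hx)
  rw [energyDeriv, rpow_neg_three_div_two (sub_pos.2 hx).le]
  field_simp
  ring

lemma sq_four_mul_sqrt_pow_three (hx : x ≤ θ) :
    (4 * L * x * √(θ - x) ^ 3) ^ 2 = 16 * L ^ 2 * critPoly θ x := by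
  have h := sq_sqrt (sub_nonneg.2 hx)
  set s := √(θ - x)
  unfold critPoly
  linear_combination (16 * L ^ 2 * x ^ 2 * (s ^ 4 + s ^ 2 * (θ - x) + (θ - x) ^ 2)) * h

lemma energyDeriv_pos_iff (hL : 0 ≤ L) (hx0 : 0 ≤ x) (hx : x < θ) :
    0 < energyDeriv θ L x ↔ 16 * L ^ 2 * critPoly θ x < 1 := by
  have : 0 < √(θ - x) := sqrt_pos.2 (sub_pos.2 hx)
  rw [energyDeriv_eq hx, div_pos_iff_of_pos_right (by positivity), sub_pos,
    ← sq_four_mul_sqrt_pow_three hx.le, sq_lt_one_iff₀ (by positivity)]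

lemma energyDeriv_neg_iff (hL : 0 ≤ L) (hx0 : 0 ≤ x) (hx : x < θ) :
    energyDeriv θ L x < 0 ↔ 1 < 16 * L ^ 2 * critPoly θ x := by
  have : 0 < √(θ - x) := sqrt_pos.2 (sub_pos.2 hx)
  rw [energyDeriv_eq hx, div_lt_iff₀ (by positivity), zero_mul, sub_neg,
    ← sq_four_mul_sqrt_pow_three hx.le, one_lt_sq_iff₀ (by positivity)]

lemma energyDeriv_eq_zero_iff (hL : 0 ≤ L) (hx0 : 0 ≤ x) (hx : x < θ) :
    energyDeriv θ L x = 0 ↔ 16 * L ^ 2 * critPoly θ x = 1 := by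
  have : 0 < √(θ - x) := sqrt_pos.2 (sub_pos.2 hx)
  rw [energyDeriv_eq hx, div_eq_zero_iff, or_iff_left (by positivity), sub_eq_zero, eq_comm,
    ← pow_eq_one_iff_of_nonneg (by positivity) two_ne_zero, sq_four_mul_sqrt_pow_three hx.le]

lemma energy_eq (hx : x < θ) :
    energy θ L x = x / 2 * energyDeriv θ L x + (θ - 5 * x / 4) * (θ - x) ^ (-(3:ℝ)/2) := by
  have h : (θ - x) ^ (-(1:ℝ)/2) = (θ - x) * (θ - x) ^ (-(3:ℝ)/2) := by
    rw [show -(1:ℝ)/2 = 1 + -(3:ℝ)/2 by norm_num, rpow_add (sub_pos.2 hx), rpow_one]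
  rw [energy, energyDeriv, h]
  ring

lemma energy_neg_of_energyDeriv_eq_zero (hx : 4 * θ / 5 < x) (hxθ : x < θ)
    (h : energyDeriv θ L x = 0) : energy θ L x < 0 := by
  rw [energy_eq hxθ, h, mul_zero, zero_add]
  exact mul_neg_of_neg_of_pos (by linarith) (rpow_pos_of_pos (sub_pos.2 hxθ) _)

lemma energy_pos_of_energyDeriv_nonneg (hx0 : 0 ≤ x) (hx : x < 4 * θ / 5)
    (h : 0 ≤ energyDeriv θ L x) : 0 < energy θ L x := by
  rw [energy_eq (by linarith)]
  exact add_pos_of_nonneg_of_pos (mul_nonneg (by linarith) h)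
    (mul_pos (by linarith) (rpow_pos_of_pos (by linarith) _))

lemma energy_strictAntiOn {a b : ℝ} (hL : 0 ≤ L) (ha : 0 ≤ a) (hb : b < θ)
    (h : ∀ y ∈ Ioo a b, 1 < 16 * L ^ 2 * critPoly θ y) :
    StrictAntiOn (energy θ L) (Icc a b) := by
  refine strictAntiOn_of_deriv_neg (convex_Icc a b)
    (fun y hy ↦ (hasDerivAt_energy (hy.2.trans_lt hb)).continuousAt.continuousWithinAt)
    fun y hy ↦ ?_
  rw [interior_Icc] at hy
  rw [(hasDerivAt_energy (hy.2.trans hb)).deriv,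
    energyDeriv_neg_iff hL (ha.trans hy.1.le) (hy.2.trans hb)]
  exact h y hy

lemma energy_strictMonoOn {a b : ℝ} (hL : 0 ≤ L) (ha : 0 ≤ a) (hb : b < θ)
    (h : ∀ y ∈ Ioo a b, 16 * L ^ 2 * critPoly θ y < 1) :
    StrictMonoOn (energy θ L) (Icc a b) := by
  refine strictMonoOn_of_deriv_pos (convex_Icc a b)
    (fun y hy ↦ (hasDerivAt_energy (hy.2.trans_lt hb)).continuousAt.continuousWithinAt)
    fun y hy ↦ ?_
  rw [interior_Icc] at hy
  rw [(hasDerivAt_energy (hy.2.trans hb)).deriv,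
    energyDeriv_pos_iff hL (ha.trans hy.1.le) (hy.2.trans hb)]
  exact h y hy

end Energy

section Minimizer

variable {θ L Xm : ℝ}

lemma critical_eq_iff {x : ℝ} (hL : 0 ≤ L) (hx0 : 0 ≤ x) (hx : x < θ) :
    (1/2) * (θ - x) ^ (-(3:ℝ)/2) = 2 * L * x ↔ 16 * L ^ 2 * critPoly θ x = 1 := by
  rw [← sub_eq_zero]
  exact energyDeriv_eq_zero_iff hL hx0 hx

lemma lt_of_sixteen_mul_critPoly_lt_one {y : ℝ} (hXm : Xm ∈ Icc (2 * θ / 5) θ)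
    (hcrit : 16 * L ^ 2 * critPoly θ Xm = 1) (hy : y ∈ Icc (2 * θ / 5) θ)
    (h : 16 * L ^ 2 * critPoly θ y < 1) : Xm < y :=
  (critPoly_strictAntiOn.lt_iff_gt hy hXm).1 <| lt_of_mul_lt_mul_left (hcrit ▸ h) (by positivity)

lemma lt_of_one_lt_sixteen_mul_critPoly {y : ℝ} (hXm : Xm ∈ Icc (2 * θ / 5) θ)
    (hcrit : 16 * L ^ 2 * critPoly θ Xm = 1) (hy : y ∈ Icc (2 * θ / 5) θ)
    (h : 1 < 16 * L ^ 2 * critPoly θ y) : y < Xm :=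
  (critPoly_strictAntiOn.lt_iff_gt hXm hy).1 <| lt_of_mul_lt_mul_left (hcrit ▸ h) (by positivity)

variable (hL : 0 < L) (hXm : Xm ∈ Ioo (2 * θ / 5) θ) (hcrit : 16 * L ^ 2 * critPoly θ Xm = 1)
include hL hXm hcrit

lemma energy_lt_energy_of_lt {x : ℝ} (hx : Xm < x) (hxθ : x < θ) :
    energy θ L Xm < energy θ L x := by
  refine energy_strictMonoOn hL.le (by linarith [hXm.1, hXm.2]) hxθ (fun y hy ↦ ?_)
    ⟨le_rfl, hx.le⟩ ⟨hx.le, le_rfl⟩ hx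
  rw [← hcrit]
  exact mul_lt_mul_of_pos_left (critPoly_strictAntiOn ⟨hXm.1.le, hXm.2.le⟩
    ⟨by linarith [hXm.1, hy.1], by linarith [hy.2]⟩ hy.1) (by positivity)

lemma energy_lt_energy_of_gt {x : ℝ} (hx0 : 0 ≤ x) (hx : x < Xm)
    (h : 1 < 16 * L ^ 2 * critPoly θ x) : energy θ L Xm < energy θ L x := by
  refine energy_strictAntiOn hL.le hx0 hXm.2 (fun y hy ↦ ?_) ⟨le_rfl, hx.le⟩ ⟨hx.le, le_rfl⟩ hx
  have := mul_lt_mul_of_pos_left (min_critPoly_lt hx0 hy.1 hy.2 hXm.2.le)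
    (by positivity : 0 < 16 * L ^ 2)
  rwa [mul_min_of_nonneg _ _ (by positivity), hcrit, min_eq_right h.le] at this

end Minimizer

section GlobalMinimum

variable {θ L Xm : ℝ}

lemma f_zero : f θ L 0 = 0 := if_pos rfl

lemma f_neg_of_critical (hL : 0 ≤ L) (hXm : Xm ∈ Ioo (4 * θ / 5) θ)
    (hcrit : 16 * L ^ 2 * critPoly θ Xm = 1) : f θ L Xm < 0 := by
  have hXm0 : 0 < Xm := by linarith [hXm.1, hXm.2]
  rw [f_eq_energy hXm0.ne']
  exact energy_neg_of_energyDeriv_eq_zero hXm.1 hXm.2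
    ((energyDeriv_eq_zero_iff hL hXm0.le hXm.2).2 hcrit)

lemma f_lt_f_of_ne (hL : 0 < L) (hXm : Xm ∈ Ioo (4 * θ / 5) θ)
    (hcrit : 16 * L ^ 2 * critPoly θ Xm = 1) {x : ℝ} (hx0 : 0 ≤ x) (hxθ : x < θ) (hne : x ≠ Xm) :
    f θ L Xm < f θ L x := by
  have hθ : 0 < θ := by linarith [hXm.1, hXm.2]
  have hXm0 : 0 < Xm := by linarith [hXm.1]
  have hXm' : Xm ∈ Ioo (2 * θ / 5) θ := ⟨by linarith [hXm.1], hXm.2⟩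
  have hfXm := f_neg_of_critical hL.le hXm hcrit
  obtain rfl | hx0 := hx0.eq_or_lt
  · rwa [f_zero]
  rw [f_eq_energy hXm0.ne'] at hfXm
  rw [f_eq_energy hXm0.ne', f_eq_energy hx0.ne']
  obtain hlt | hgt := hne.lt_or_gt
  · by_cases h1 : 1 < 16 * L ^ 2 * critPoly θ x
    · exact energy_lt_energy_of_gt hL hXm' hcrit hx0.le hlt h1
    have hx25 : x ≤ 2 * θ / 5 := by
      by_contra! hx25
      exact h1 (hcrit ▸ mul_lt_mul_of_pos_left
        (critPoly_strictAntiOn ⟨hx25.le, hxθ.le⟩ ⟨hXm'.1.le, hXm.2.le⟩ hlt) (by positivity))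
    have hderiv := not_lt.1 (mt (energyDeriv_neg_iff hL.le hx0.le hxθ).1 h1)
    linarith [energy_pos_of_energyDeriv_nonneg (L := L) hx0.le (by linarith) hderiv]
  · exact energy_lt_energy_of_lt hL hXm' hcrit hgt hxθ

end GlobalMinimum

section Parameters

variable {α θ L : ℝ}

lemma sixteen_mul_critPoly_sub_lt_one (hα : 0 < α) (hL : 0 < L) (ht : 0 < θ - α ^ 2 / L ^ 2)
    (h : 4 * α ^ 3 * θ * L ^ 2 < L ^ 4 + 4 * α ^ 5) :
    16 * L ^ 2 * critPoly θ (θ - α ^ 2 / L ^ 2) < 1 := by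
  set t := θ - α ^ 2 / L ^ 2
  have key : 4 * α ^ 3 * t < L ^ 2 := by
    refine lt_of_mul_lt_mul_right ?_ (sq_nonneg L)
    have : 4 * α ^ 3 * t * L ^ 2 = 4 * α ^ 3 * θ * L ^ 2 - 4 * α ^ 5 := by
      simp only [t]; field_simp
    nlinarith
  calc 16 * L ^ 2 * critPoly θ t = (4 * α ^ 3 * t) ^ 2 / (L ^ 2) ^ 2 := by
        simp only [critPoly, t, sub_sub_cancel]; field_simp; ring
    _ < 1 := by
      rw [div_lt_one (by positivity)]
      exact pow_lt_pow_left₀ key (by positivity) two_ne_zero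

lemma lt_sub_of_critical {Xm : ℝ} (hα : 0 < α) (hL : 0 < L) (hXm : Xm ∈ Ioo (2 * θ / 5) θ)
    (hcrit : 16 * L ^ 2 * critPoly θ Xm = 1) (h3 : 4 * α ^ 3 * θ * L ^ 2 < L ^ 4 + 4 * α ^ 5)
    (h4 : 5 * α ^ 2 < 3 * θ * L ^ 2) : Xm < θ - α ^ 2 / L ^ 2 := by
  have ht : 2 * θ / 5 < θ - α ^ 2 / L ^ 2 := by
    rw [lt_sub_comm, div_lt_iff₀ (by positivity)]
    linarith
  refine lt_of_sixteen_mul_critPoly_lt_one ⟨hXm.1.le, hXm.2.le⟩ hcrit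
    ⟨ht.le, sub_le_self _ (by positivity)⟩ (sixteen_mul_critPoly_sub_lt_one hα hL ?_ h3)
  linarith [hXm.1, hXm.2]

lemma L01_lt_iff (hθ : 0 < θ) (hL : 0 ≤ L) : L01 θ < L ↔ 3125 < 256 * θ ^ 5 * L ^ 2 := by
  have hsq : L01 θ ^ 2 = 3125 / (256 * θ ^ 5) := by
    rw [L01, mul_pow, div_pow, sq_rpow_div_two (by norm_num), sq_rpow_div_two hθ.le,
      rpow_neg hθ.le, show (5:ℝ) = ((5:ℕ):ℝ) by norm_num, rpow_natCast, rpow_natCast]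
    field_simp
    norm_num
  rw [← pow_lt_pow_iff_left₀ (by unfold L01; positivity) hL two_ne_zero, hsq,
    div_lt_iff₀ (by positivity), mul_comm]

lemma Ld_lt_iff (hθ : 0 < θ) (hL : 0 ≤ L) : Ld θ < L ↔ 3125 < 1728 * θ ^ 5 * L ^ 2 := by
  have hsq : Ld θ ^ 2 = 3125 / (1728 * θ ^ 5) := by
    rw [Ld, mul_pow, mul_pow, sq_sqrt (by norm_num), sq_rpow_div_two hθ.le, rpow_neg hθ.le,
      show (5:ℝ) = ((5:ℕ):ℝ) by norm_num, rpow_natCast]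
    field_simp
    norm_num
  rw [← pow_lt_pow_iff_left₀ (by unfold Ld; positivity) hL two_ne_zero, hsq,
    div_lt_iff₀ (by positivity), mul_comm]

lemma le_θstar_iff (hα : 0 < α) (hθ : 0 < θ) : θ ≤ θstar α ↔ α * θ ^ 2 ≤ 25 / 16 := by
  rw [θstar, rpow_neg_one_div_two hα.le, ← div_eq_mul_inv, le_div_iff₀ (sqrt_pos.2 hα),
    ← pow_le_pow_iff_left₀ (by positivity) (by norm_num) two_ne_zero, mul_pow, sq_sqrt hα.le,
    mul_comm]
  norm_num

/-- `2α³θ ± 2α²√(α(αθ² - 1))` are the roots of `M ↦ M² - 4α³θ M + 4α⁵`. -/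
lemma quadratic_pos_of_root_lt (hα : 0 < α) (ha : 1 ≤ α * θ ^ 2)
    (h : 2 * α ^ 3 * θ + 2 * α ^ 2 * √(α * (α * θ ^ 2 - 1)) < L ^ 2) :
    4 * α ^ 3 * θ * L ^ 2 < L ^ 4 + 4 * α ^ 5 := by
  set s := √(α * (α * θ ^ 2 - 1))
  have hs : s ^ 2 = α * (α * θ ^ 2 - 1) := sq_sqrt (mul_nonneg hα.le (by linarith))
  have hfac : L ^ 4 + 4 * α ^ 5 - 4 * α ^ 3 * θ * L ^ 2 =
      (L ^ 2 - (2 * α ^ 3 * θ + 2 * α ^ 2 * s)) * (L ^ 2 - (2 * α ^ 3 * θ - 2 * α ^ 2 * s)) := by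
    linear_combination 4 * α ^ 4 * hs
  have : 0 ≤ 2 * α ^ 2 * s := by positivity
  nlinarith [mul_pos (sub_pos.2 h) (by linarith : 0 < L ^ 2 - (2 * α ^ 3 * θ - 2 * α ^ 2 * s))]

lemma inequalities_of_le_θstar (hα : 0 < α) (hθ : 0 < θ) (ha : α * θ ^ 2 ≤ 25 / 16)
    (h : 3125 < 256 * θ ^ 5 * L ^ 2) :
    4 * α ^ 3 * θ * L ^ 2 < L ^ 4 + 4 * α ^ 5 ∧ 5 * α ^ 2 < 3 * θ * L ^ 2 := by
  have hu : 0 < α * θ ^ 2 := by positivity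
  have hθ4 : 0 < θ ^ 4 := by positivity
  refine ⟨?_, ?_⟩
  · rcases le_or_gt (α * θ ^ 2) 1 with ha1 | ha1
    · have h4 : 4 * α ^ 3 * θ < L ^ 2 := by
        nlinarith [pow_le_one₀ hu.le ha1 (n := 3), pow_pos hθ 5]
      nlinarith [pow_pos hα 5]
    refine quadratic_pos_of_root_lt hα ha1.le ?_
    set s := √(α * (α * θ ^ 2 - 1))
    have hs : s ^ 2 = α * (α * θ ^ 2 - 1) := sq_sqrt (mul_nonneg hα.le (by linarith))
    have hθs : θ * s ≤ 15 / 16 := by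
      nlinarith [mul_nonneg hθ.le (sqrt_nonneg (α * (α * θ ^ 2 - 1)))]
    have : θ ^ 5 * (2 * α ^ 3 * θ + 2 * α ^ 2 * s) ≤ 3125 / 256 := by
      have : θ ^ 5 * (2 * α ^ 3 * θ + 2 * α ^ 2 * s) =
          2 * (α * θ ^ 2) ^ 3 + 2 * (α * θ ^ 2) ^ 2 * (θ * s) := by ring
      nlinarith [mul_le_mul_of_nonneg_left hθs (sq_nonneg (α * θ ^ 2))]
    nlinarith [pow_pos hθ 5]
  · nlinarith [mul_le_mul ha ha hu.le (by norm_num)]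

lemma inequalities_of_θstar_lt (hα : 0 < α) (hθ : 0 < θ) (hL : 0 < L)
    (ha : 25 / 16 < α * θ ^ 2) (h : L12 α θ < L) :
    3125 < 256 * θ ^ 5 * L ^ 2 ∧ 4 * α ^ 3 * θ * L ^ 2 < L ^ 4 + 4 * α ^ 5 ∧
      5 * α ^ 2 < 3 * θ * L ^ 2 := by
  rw [L12, sqrt_lt' hL] at h
  set s := √(α * (α * θ ^ 2 - 1))
  have hs : s ^ 2 = α * (α * θ ^ 2 - 1) := sq_sqrt (mul_nonneg hα.le (by linarith))
  have hs_ge : 3 / 5 * (α * θ) ≤ s := by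
    nlinarith [sqrt_nonneg (α * (α * θ ^ 2 - 1)), mul_pos hα hθ]
  have hL2 : 16 / 5 * (α ^ 3 * θ) < L ^ 2 := by
    nlinarith [mul_le_mul_of_nonneg_left hs_ge (by positivity : (0:ℝ) ≤ 2 * α ^ 2)]
  refine ⟨?_, quadratic_pos_of_root_lt hα (by linarith) h, ?_⟩
  · nlinarith [mul_lt_mul_of_pos_right hL2 (pow_pos hθ 5),
      pow_lt_pow_left₀ ha (by norm_num) (three_ne_zero)]
  · nlinarith [mul_lt_mul_of_pos_right hL2 hθ]

lemma inequalities_of_mem_D1 (hα : 0 < α) (hθ : 0 < θ) (hL : 0 < L)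
    (hD1 : (θ ≤ θstar α ∧ L01 θ < L) ∨ (θstar α < θ ∧ L12 α θ < L)) :
    3125 < 256 * θ ^ 5 * L ^ 2 ∧ 4 * α ^ 3 * θ * L ^ 2 < L ^ 4 + 4 * α ^ 5 ∧
      5 * α ^ 2 < 3 * θ * L ^ 2 := by
  rcases hD1 with ⟨hθ', hL'⟩ | ⟨hθ', hL'⟩
  · rw [le_θstar_iff hα hθ] at hθ'
    rw [L01_lt_iff hθ hL.le] at hL'
    exact ⟨hL', inequalities_of_le_θstar hα hθ hθ' hL'⟩
  · rw [← not_le, le_θstar_iff hα hθ, not_le] at hθ'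
    exact inequalities_of_θstar_lt hα hθ hL hθ' hL'

end Parameters

/-- For `(θ, L) ∈ D_1` (i.e. `0 < θ ≤ θ*` and `L > L_01(θ)`, or `θ > θ*` and
`L > L_12(θ)`): `L > L_d(θ)`, the critical point `X_m` (the unique point of `(2θ/5, θ)` where
`(1/2)(θ - X)^(-3/2) = 2LX`) satisfies `0 < X_m < θ̃` (so `X_m ∈ D`) and `f(X_m) < 0 = f(0)`,
and `X_m` is the unique global minimizer of `f` on `D`: `f(X) > f(X_m)` for all `X ∈ D`,
`X ≠ X_m`. -/
theorem stmt_15 (α θ L : ℝ) (hα : 0 < α) (hθ : 0 < θ) (hL : 0 < L)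
    (hD1 : (θ ≤ θstar α ∧ L01 θ < L) ∨ (θstar α < θ ∧ L12 α θ < L)) :
    Ld θ < L ∧
    ∃ Xm : ℝ, (Xm ∈ Ioo (2*θ/5) θ ∧ (1/2) * (θ - Xm) ^ (-(3:ℝ)/2) = 2 * L * Xm) ∧
      (∀ X ∈ Ioo (2*θ/5) θ, (1/2) * (θ - X) ^ (-(3:ℝ)/2) = 2 * L * X → X = Xm) ∧
      0 < Xm ∧ Xm < θ - α^2/L^2 ∧
      f θ L Xm < 0 ∧ f θ L 0 = 0 ∧
      (∀ X ∈ Icc (0:ℝ) (max (θ - α^2/L^2) 0), X ≠ Xm → f θ L Xm < f θ L X) := by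
  obtain ⟨h01, hquad, hsub⟩ := inequalities_of_mem_D1 hα hθ hL hD1
  have hθ5 : 0 < θ ^ 5 * L ^ 2 := by positivity
  obtain ⟨Xm, hXm, hcrit⟩ := exists_sixteen_mul_critPoly_eq_one (L := L) hθ
    (by unfold critPoly; nlinarith)
  have hXm45 : 4 * θ / 5 < Xm := lt_of_one_lt_sixteen_mul_critPoly ⟨hXm.1.le, hXm.2.le⟩ hcrit
    ⟨by linarith, by linarith⟩ (by unfold critPoly; nlinarith)
  have hXm0 : 0 < Xm := by linarith
  refine ⟨(Ld_lt_iff hθ hL.le).2 (by linarith), Xm,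
    ⟨hXm, (critical_eq_iff hL.le hXm0.le hXm.2).2 hcrit⟩, fun X hX hXcrit ↦ ?_, hXm0,
    lt_sub_of_critical hα hL hXm hcrit hquad hsub, f_neg_of_critical hL.le ⟨hXm45, hXm.2⟩ hcrit,
    f_zero, fun X hX hne ↦ f_lt_f_of_ne hL ⟨hXm45, hXm.2⟩ hcrit hX.1 ?_ hne⟩
  · rw [critical_eq_iff hL.le (by linarith [hX.1]) hX.2, ← hcrit] at hXcrit
    exact critPoly_strictAntiOn.injOn ⟨hX.1.le, hX.2.le⟩ ⟨hXm.1.le, hXm.2.le⟩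
      (mul_left_cancel₀ (by positivity) hXcrit)
  · exact hX.2.trans_lt (max_lt (sub_lt_self _ (by positivity)) hθ)
end

section
/- Let c ≤ 0 be a real number and let x₀ < y₀. Then there is no function ζ : [x₀, y₀] → ℝ that is C¹ on [x₀, y₀] and C⁴ on (x₀, y₀), satisfies the ordinary differential equation ζ⁗(x) + c·ζ″(x) = 0 for all x ∈ (x₀, y₀), is strictly positive on (x₀, y₀), and satisfies ζ(x₀) = ζ(y₀) = 0 and ζ′(x₀) = ζ′(y₀) = 0. -/
/-!
Let `s` be the leftmost point where `ζ` attains its maximum on `[x₀, y₀]`; it is interior, so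
`ζ'(s) = 0`. Rolle's theorem applied to `ζ'` on `[x₀, s]` and `[s, y₀]` gives zeros `p < s < q`
of `w = ζ''`. Since `w'' = -c w`, the function `w²` has second derivative `2 w'² - 2 c w² ≥ 0`,
so it is convex on `[p, q]` and vanishes at both ends, hence `w = 0` there. Then `ζ'` is constant,
equal to `ζ'(s) = 0`, on `(p, q)`, so `ζ` takes its maximal value on `(p, s)`, contradicting the
choice of `s`.
-/

open Real Set Filter Topology

theorem IsCompact.exists_isLeast_isMaxOn {α β : Type*} [LinearOrder α] [TopologicalSpace α]
    [OrderClosedTopology α] [LinearOrder β] [TopologicalSpace β] [OrderClosedTopology β]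
    {K : Set α} {f : α → β} (hK : IsCompact K) (hne : K.Nonempty) (hf : ContinuousOn f K) :
    ∃ s, IsLeast {x ∈ K | IsMaxOn f K x} s := by
  obtain ⟨m, hmK, hm⟩ := hK.exists_isMaxOn hne hf
  have hset : {x ∈ K | IsMaxOn f K x} = K ∩ f ⁻¹' Ici (f m) := by
    ext x
    refine ⟨fun ⟨hx, hxmax⟩ => ⟨hx, hxmax hmK⟩, fun ⟨hx, hxm⟩ => ⟨hx, fun y hy => ?_⟩⟩
    exact (hm hy).trans hxm
  rw [hset]
  have hclosed := hf.preimage_isClosed_of_isClosed hK.isClosed (isClosed_Ici (a := f m))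
  exact (hK.of_isClosed_subset hclosed inter_subset_left).exists_isLeast ⟨m, hmK, le_rfl⟩

theorem ContDiffOn.hasDerivAt_iteratedDeriv {𝕜 F : Type*} [NontriviallyNormedField 𝕜]
    [NormedAddCommGroup F] [NormedSpace 𝕜 F] {f : 𝕜 → F} {s : Set 𝕜} {n : WithTop ℕ∞} {k : ℕ}
    {x : 𝕜} (hf : ContDiffOn 𝕜 n f s) (hs : IsOpen s) (hk : k < n) (hx : x ∈ s) :
    HasDerivAt (iteratedDeriv k f) (iteratedDeriv (k + 1) f x) x := by
  have hdiff := (hf.differentiableOn_iteratedDerivWithin hk hs.uniqueDiffOn).differentiableAt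
    (hs.mem_nhds hx)
  have heq : iteratedDerivWithin k f s =ᶠ[𝓝 x] iteratedDeriv k f :=
    eventually_of_mem (hs.mem_nhds hx) fun y hy => iteratedDerivWithin_of_isOpen hs hy
  rw [iteratedDeriv_succ]
  exact (hdiff.congr_of_eventuallyEq heq.symm).hasDerivAt

theorem exists_iteratedDeriv_two_eq_zero {f : ℝ → ℝ} {a b u v : ℝ}
    (h₁ : ContDiffOn ℝ 1 f (Icc a b)) (h₂ : ContDiffOn ℝ 2 f (Ioo a b))
    (hau : a ≤ u) (huv : u < v) (hvb : v ≤ b)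
    (huv_eq : derivWithin f (Icc a b) u = derivWithin f (Icc a b) v) :
    ∃ c ∈ Ioo u v, iteratedDeriv 2 f c = 0 := by
  have hab : a < b := (hau.trans_lt huv).trans_le hvb
  have hcont : ContinuousOn (derivWithin f (Icc a b)) (Icc a b) :=
    h₁.continuousOn_derivWithin (uniqueDiffOn_Icc hab) le_rfl
  refine exists_hasDerivAt_eq_zero huv (hcont.mono (Icc_subset_Icc hau hvb)) huv_eq
    fun x hx => ?_
  have hx' : x ∈ Ioo a b := ⟨hau.trans_lt hx.1, hx.2.trans_le hvb⟩
  have heq : iteratedDeriv 1 f =ᶠ[𝓝 x] derivWithin f (Icc a b) :=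
    eventually_of_mem (Ioo_mem_nhds hx'.1 hx'.2) fun y hy => by
      rw [iteratedDeriv_one, derivWithin_of_mem_nhds (Icc_mem_nhds hy.1 hy.2)]
  exact (h₂.hasDerivAt_iteratedDeriv isOpen_Ioo (by norm_num) hx').congr_of_eventuallyEq heq.symm

theorem eqOn_zero_of_mul_deriv2_nonneg {w w' w'' : ℝ → ℝ} {a b : ℝ}
    (hw : ContinuousOn w (Icc a b)) (hw' : ∀ x ∈ Ioo a b, HasDerivAt w (w' x) x)
    (hw'' : ∀ x ∈ Ioo a b, HasDerivAt w' (w'' x) x) (hnonneg : ∀ x ∈ Ioo a b, 0 ≤ w x * w'' x)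
    (ha : w a = 0) (hb : w b = 0) : EqOn w 0 (Icc a b) := by
  have hconv : ConvexOn ℝ (Icc a b) (fun x => w x ^ 2) := by
    refine convexOn_of_hasDerivWithinAt2_nonneg (convex_Icc a b) (hw.pow 2)
      (f' := fun x => 2 * w x * w' x) (f'' := fun x => 2 * w' x * w' x + 2 * w x * w'' x)
      ?_ ?_ ?_ <;> rw [interior_Icc] <;> intro x hx
    · exact ((hw' x hx).pow 2).hasDerivWithinAt.congr_deriv (by push_cast; ring)
    · exact (((hw' x hx).const_mul 2).mul (hw'' x hx)).hasDerivWithinAt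
    · nlinarith [mul_self_nonneg (w' x), hnonneg x hx]
  intro x hx
  have hle : w x ^ 2 ≤ max (w a ^ 2) (w b ^ 2) :=
    hconv.le_on_segment (left_mem_Icc.2 (hx.1.trans hx.2)) (right_mem_Icc.2 (hx.1.trans hx.2))
      (Icc_subset_segment hx)
  rw [ha, hb] at hle
  exact pow_eq_zero_iff two_ne_zero |>.1 (le_antisymm (by simpa using hle) (sq_nonneg _))

theorem IsOpen.eq_of_iteratedDeriv_two_eqOn_zero {𝕜 G : Type*} [RCLike 𝕜] [NormedAddCommGroup G]
    [NormedSpace 𝕜 G] {f : 𝕜 → G} {U : Set 𝕜} {s x : 𝕜} (hU : IsOpen U) (hU' : IsPreconnected U)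
    (hf : ContDiffOn 𝕜 2 f U) (h₂ : EqOn (iteratedDeriv 2 f) 0 U) (hs : s ∈ U)
    (hs' : deriv f s = 0) (hx : x ∈ U) : f x = f s := by
  have hderiv : ∀ y ∈ U, HasDerivAt (deriv f) (iteratedDeriv 2 f y) y := fun y hy => by
    simpa only [iteratedDeriv_one] using hf.hasDerivAt_iteratedDeriv hU (k := 1) (by norm_num) hy
  have hd : EqOn (deriv f) 0 U := fun y hy => by
    have hdiff : DifferentiableOn 𝕜 (deriv f) U := fun z hz =>
      (hderiv z hz).differentiableAt.differentiableWithinAt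
    have hd₂ : EqOn (deriv (deriv f)) 0 U := fun z hz => (hderiv z hz).deriv.trans (h₂ hz)
    rw [hU.is_const_of_deriv_eq_zero hU' hdiff hd₂ hy hs, hs']
    rfl
  exact hU.is_const_of_deriv_eq_zero hU' (hf.differentiableOn (by norm_num)) hd hx hs

/-- For `c ≤ 0` and `x₀ < y₀`, there is no function `ζ`, C¹ on `[x₀, y₀]` and
C⁴ on `(x₀, y₀)`, with `ζ⁗ + c·ζ″ = 0` on `(x₀, y₀)`, `ζ > 0` on `(x₀, y₀)`, and
`ζ = ζ' = 0` at both endpoints. -/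
theorem stmt_18 (c x₀ y₀ : ℝ) (hc : c ≤ 0) (hxy : x₀ < y₀) :
    ¬ ∃ ζ : ℝ → ℝ,
      ContDiffOn ℝ 1 ζ (Icc x₀ y₀) ∧
      ContDiffOn ℝ 4 ζ (Ioo x₀ y₀) ∧
      (∀ x ∈ Ioo x₀ y₀, iteratedDeriv 4 ζ x + c * iteratedDeriv 2 ζ x = 0) ∧
      (∀ x ∈ Ioo x₀ y₀, 0 < ζ x) ∧
      ζ x₀ = 0 ∧ ζ y₀ = 0 ∧
      derivWithin ζ (Icc x₀ y₀) x₀ = 0 ∧ derivWithin ζ (Icc x₀ y₀) y₀ = 0 := by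
  rintro ⟨ζ, h₁, h₄, hode, hpos, hx₀, hy₀, hd₀, hd₁⟩
  obtain ⟨s, ⟨hsIcc, hsmax⟩, hsleast⟩ :=
    isCompact_Icc.exists_isLeast_isMaxOn (nonempty_Icc.2 hxy.le) h₁.continuousOn
  have hs : s ∈ Ioo x₀ y₀ := by
    have hmid : (x₀ + y₀) / 2 ∈ Ioo x₀ y₀ := ⟨by linarith, by linarith⟩
    have : 0 < ζ s := (hpos _ hmid).trans_le (hsmax (Ioo_subset_Icc_self hmid))
    exact ⟨hsIcc.1.lt_of_ne (by rintro rfl; linarith), hsIcc.2.lt_of_ne (by rintro rfl; linarith)⟩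
  have hs_nhds : Icc x₀ y₀ ∈ 𝓝 s := Icc_mem_nhds hs.1 hs.2
  have hs_crit : deriv ζ s = 0 := (hsmax.isLocalMax hs_nhds).deriv_eq_zero
  have hs_crit' : derivWithin ζ (Icc x₀ y₀) s = 0 := by
    rwa [derivWithin_of_mem_nhds hs_nhds]
  have h₂ : ContDiffOn ℝ 2 ζ (Ioo x₀ y₀) := h₄.of_le (by norm_num)
  obtain ⟨p, hp, hp₀⟩ :=
    exists_iteratedDeriv_two_eq_zero h₁ h₂ le_rfl hs.1 hs.2.le (hd₀.trans hs_crit'.symm)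
  obtain ⟨q, hq, hq₀⟩ :=
    exists_iteratedDeriv_two_eq_zero h₁ h₂ hs.1.le hs.2 le_rfl (hs_crit'.trans hd₁.symm)
  have hpq : Icc p q ⊆ Ioo x₀ y₀ := Icc_subset_Ioo hp.1 hq.2
  have hderiv (k : ℕ) (hk : k < 4) {x : ℝ} (hx : x ∈ Icc p q) :=
    h₄.hasDerivAt_iteratedDeriv isOpen_Ioo (mod_cast hk) (hpq hx)
  have hw : EqOn (iteratedDeriv 2 ζ) 0 (Icc p q) := by
    refine eqOn_zero_of_mul_deriv2_nonneg
      (fun x hx => (hderiv 2 (by norm_num) hx).continuousAt.continuousWithinAt)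
      (fun x hx => hderiv 2 (by norm_num) (Ioo_subset_Icc_self hx))
      (fun x hx => hderiv 3 (by norm_num) (Ioo_subset_Icc_self hx)) (fun x hx => ?_) hp₀ hq₀
    show 0 ≤ iteratedDeriv 2 ζ x * iteratedDeriv 4 ζ x
    have hw₄ : iteratedDeriv 4 ζ x = -c * iteratedDeriv 2 ζ x := by
      linarith [hode x (hpq (Ioo_subset_Icc_self hx))]
    rw [hw₄, mul_left_comm]
    exact mul_nonneg (neg_nonneg.2 hc) (mul_self_nonneg _)
  obtain ⟨x, hx⟩ : (Ioo p s).Nonempty := nonempty_Ioo.2 hp.2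
  have hxs : ζ x = ζ s := isOpen_Ioo.eq_of_iteratedDeriv_two_eqOn_zero isPreconnected_Ioo
    (h₂.mono fun y hy => hpq (Ioo_subset_Icc_self hy)) (hw.mono Ioo_subset_Icc_self)
    ⟨hp.2, hq.1⟩ hs_crit ⟨hx.1, hx.2.trans hq.1⟩
  have hxIcc : x ∈ Icc x₀ y₀ := ⟨hp.1.le.trans hx.1.le, hx.2.le.trans hsIcc.2⟩
  have hxmax : IsMaxOn ζ (Icc x₀ y₀) x := fun y hy => hxs ▸ hsmax hy
  exact (hsleast ⟨hxIcc, hxmax⟩).not_gt hx.2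
end
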